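/- arXiv:0812.4495 — 3 statements merged into one kernel-verified Lean document; each statement's English description precedes it below -/
import Mathlib

section
/- In the standing setup, for all a∈J, x∈K, r, r'∈R, s, s'∈S the skew pairing τ satisfies: (i) τ(ra, sx) = τ(r_J, x₁) τ(r_R, s) τ(a, x₂), where θ(r) = r_J⊗r_R is the J-coaction on r; (ii) τ(r, ss') = τ(r₍₁₎, s') τ(r₍₂₎, s); (iii) τ(rr', s) = τ(r, 𝒮̄_K(s₍₂₎_K) ⊳ s₍₁₎) τ(r', s₍₂₎_S), where 𝒮̄_K is the pode of K and s₍₂₎_K⊗s₍₂₎_S denotes the K-coaction on s₍₂₎. -/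
open TensorProduct BigOperators

noncomputable section

namespace QB

variable (k : Type) [Field k]

/-- Data of a Hopf algebra structure (with bijective antipode, whose inverse is the
pode) on a `k`-algebra `H`. -/
structure HopfData (H : Type) [Ring H] [Algebra k H] where
  comul : H →ₗ[k] H ⊗[k] H
  counit : H →ₗ[k] k
  antipode : H →ₗ[k] H
  pode : H →ₗ[k] H
  comul_one : comul 1 = 1 ⊗ₜ[k] 1
  comul_mul : ∀ a b : H, comul (a * b) = comul a * comul b
  counit_one : counit 1 = 1
  counit_mul : ∀ a b : H, counit (a * b) = counit a * counit b
  coassoc : ∀ a : H,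
    (TensorProduct.assoc k H H H) ((comul.rTensor H) (comul a)) = (comul.lTensor H) (comul a)
  counit_comul : ∀ a : H, (TensorProduct.lid k H) ((counit.rTensor H) (comul a)) = a
  comul_counit : ∀ a : H, (TensorProduct.rid k H) ((counit.lTensor H) (comul a)) = a
  antipode_conv : ∀ a : H, (LinearMap.mul' k H) ((antipode.rTensor H) (comul a)) = counit a • 1
  conv_antipode : ∀ a : H, (LinearMap.mul' k H) ((antipode.lTensor H) (comul a)) = counit a • 1
  pode_antipode : ∀ a : H, pode (antipode a) = a
  antipode_pode : ∀ a : H, antipode (pode a) = a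

/-- A (left-left) Yetter-Drinfeld module over the Hopf algebra `(H, D)`. -/
structure YDMod (H : Type) [Ring H] [Algebra k H] (D : HopfData k H)
    (V : Type) [AddCommGroup V] [Module k V] where
  act : H →ₗ[k] V →ₗ[k] V
  act_one : ∀ v, act 1 v = v
  act_mul : ∀ (a b : H) (v : V), act (a * b) v = act a (act b v)
  coact : V →ₗ[k] H ⊗[k] V
  coact_counit : ∀ v, (TensorProduct.lid k V) ((D.counit.rTensor V) (coact v)) = v
  coact_coassoc : ∀ v,
    (TensorProduct.assoc k H H V) ((D.comul.rTensor V) (coact v)) = (coact.lTensor H) (coact v)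
  yd_compat : ∀ (a : H) (v : V) (p q : ℕ) (a1 a2 a3 : Fin p → H)
      (vJ : Fin q → H) (vV : Fin q → V),
    (D.comul.rTensor H) (D.comul a) = ∑ i, (a1 i ⊗ₜ[k] a2 i) ⊗ₜ[k] a3 i →
    coact v = ∑ j, vJ j ⊗ₜ[k] vV j →
    coact (act a v) = ∑ i, ∑ j, (a1 i * vJ j * D.antipode (a3 i)) ⊗ₜ[k] act (a2 i) (vV j)

end QB

namespace QB

variable (k : Type) [Field k]

/-- A braided graded Hopf algebra `R` (given as an ordinary `k`-algebra together with a
braided coproduct) in the category of Yetter-Drinfeld modules over `(J, D)`, with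
`R(0) = k`, together with its antipode. -/
structure BGH (J : Type) [Ring J] [Algebra k J] (D : HopfData k J)
    (R : Type) [Ring R] [Algebra k R] extends YDMod k J D R where
  grade : ℕ → Submodule k R
  internal : DirectSum.IsInternal grade
  one_grade : (1 : R) ∈ grade 0
  mul_grade : ∀ {m n : ℕ} {r s : R}, r ∈ grade m → s ∈ grade n → r * s ∈ grade (m + n)
  grade0 : grade 0 = Submodule.span k {(1 : R)}
  comul : R →ₗ[k] R ⊗[k] R
  counit : R →ₗ[k] k
  comul_one : comul 1 = 1 ⊗ₜ[k] 1
  counit_one : counit 1 = 1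
  counit_mul : ∀ r s : R, counit (r * s) = counit r * counit s
  coassoc : ∀ r : R,
    (TensorProduct.assoc k R R R) ((comul.rTensor R) (comul r)) = (comul.lTensor R) (comul r)
  counit_comul : ∀ r : R, (TensorProduct.lid k R) ((counit.rTensor R) (comul r)) = r
  comul_counit : ∀ r : R, (TensorProduct.rid k R) ((counit.lTensor R) (comul r)) = r
  /-- braided multiplicativity of the coproduct -/
  comul_mul : ∀ (r s : R) (p q u : ℕ) (r1 r2 : Fin p → R) (rJ : Fin p → Fin q → J)
      (rV : Fin p → Fin q → R) (s1 s2 : Fin u → R),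
    comul r = ∑ i, r1 i ⊗ₜ[k] r2 i →
    (∀ i, coact (r2 i) = ∑ j, rJ i j ⊗ₜ[k] rV i j) →
    comul s = ∑ t, s1 t ⊗ₜ[k] s2 t →
    comul (r * s) = ∑ i, ∑ j, ∑ t, (r1 i * act (rJ i j) (s1 t)) ⊗ₜ[k] (rV i j * s2 t)
  /-- `R` is a `J`-module algebra -/
  act_mul_alg : ∀ (a : J) (r s : R) (p : ℕ) (a1 a2 : Fin p → J),
    D.comul a = ∑ i, a1 i ⊗ₜ[k] a2 i →
    act a (r * s) = ∑ i, act (a1 i) r * act (a2 i) s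
  act_one_alg : ∀ a : J, act a (1 : R) = D.counit a • (1 : R)
  /-- `R` is a `J`-comodule algebra -/
  coact_mul : ∀ (r s : R) (p q : ℕ) (rJ : Fin p → J) (rV : Fin p → R)
      (sJ : Fin q → J) (sV : Fin q → R),
    coact r = ∑ i, rJ i ⊗ₜ[k] rV i → coact s = ∑ j, sJ j ⊗ₜ[k] sV j →
    coact (r * s) = ∑ i, ∑ j, (rJ i * sJ j) ⊗ₜ[k] (rV i * sV j)
  coact_one : coact 1 = 1 ⊗ₜ[k] 1
  /-- the coproduct is `J`-linear -/
  comul_act : ∀ (a : J) (r : R) (p q : ℕ) (a1 a2 : Fin p → J) (r1 r2 : Fin q → R),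
    D.comul a = ∑ i, a1 i ⊗ₜ[k] a2 i → comul r = ∑ j, r1 j ⊗ₜ[k] r2 j →
    comul (act a r) = ∑ i, ∑ j, act (a1 i) (r1 j) ⊗ₜ[k] act (a2 i) (r2 j)
  counit_act : ∀ (a : J) (r : R), counit (act a r) = D.counit a * counit r
  /-- the coproduct is `J`-colinear -/
  comul_coact : ∀ (r : R) (p q u : ℕ) (r1 r2 : Fin p → R)
      (aJ : Fin p → Fin q → J) (aV : Fin p → Fin q → R)
      (bJ : Fin p → Fin u → J) (bV : Fin p → Fin u → R)
      (w : ℕ) (rJ : Fin w → J) (rV : Fin w → R),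
    comul r = ∑ i, r1 i ⊗ₜ[k] r2 i →
    (∀ i, coact (r1 i) = ∑ j, aJ i j ⊗ₜ[k] aV i j) →
    (∀ i, coact (r2 i) = ∑ t, bJ i t ⊗ₜ[k] bV i t) →
    coact r = ∑ j, rJ j ⊗ₜ[k] rV j →
    ∑ i, ∑ j, ∑ t, (aJ i j * bJ i t) ⊗ₜ[k] (aV i j ⊗ₜ[k] bV i t)
      = ∑ j, rJ j ⊗ₜ[k] comul (rV j)
  /-- the counit is `J`-colinear -/
  counit_coact : ∀ (r : R) (w : ℕ) (rJ : Fin w → J) (rV : Fin w → R),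
    coact r = ∑ j, rJ j ⊗ₜ[k] rV j → ∑ j, counit (rV j) • rJ j = counit r • (1 : J)
  /-- the action preserves the grading -/
  act_grade : ∀ (a : J) {n : ℕ} {r : R}, r ∈ grade n → act a r ∈ grade n
  /-- the coaction preserves the grading -/
  coact_grade : ∀ {n : ℕ} (r : R), r ∈ grade n → ∃ (p : ℕ) (rJ : Fin p → J) (rV : Fin p → R),
    (∀ i, rV i ∈ grade n) ∧ coact r = ∑ i, rJ i ⊗ₜ[k] rV i
  /-- the coproduct preserves the grading -/
  comul_grade : ∀ {n : ℕ} (r : R), r ∈ grade n → ∃ (p : ℕ) (d e : Fin p → ℕ) (x y : Fin p → R),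
    (∀ i, d i + e i = n ∧ x i ∈ grade (d i) ∧ y i ∈ grade (e i)) ∧
      comul r = ∑ i, x i ⊗ₜ[k] y i
  /-- the (braided) antipode of `R` -/
  antipodeR : R →ₗ[k] R
  antipodeR_conv : ∀ (r : R) (p : ℕ) (r1 r2 : Fin p → R), comul r = ∑ i, r1 i ⊗ₜ[k] r2 i →
    ∑ i, antipodeR (r1 i) * r2 i = counit r • 1
  conv_antipodeR : ∀ (r : R) (p : ℕ) (r1 r2 : Fin p → R), comul r = ∑ i, r1 i ⊗ₜ[k] r2 i →
    ∑ i, r1 i * antipodeR (r2 i) = counit r • 1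

variable {J : Type} [Ring J] [Algebra k J] {R : Type} [Ring R] [Algebra k R]

/-- `R` is a pre-Nichols algebra of `V = R(1)` iff it is generated by its degree-one part. -/
def BGH.IsPreNichols {D : HopfData k J} (B : BGH k J D R) : Prop :=
  Algebra.adjoin k (B.grade 1 : Set R) = ⊤

/-- The set of primitive elements of the braided Hopf algebra `R`. -/
def BGH.primitives {D : HopfData k J} (B : BGH k J D R) : Set R :=
  {r : R | B.comul r = r ⊗ₜ[k] 1 + 1 ⊗ₜ[k] r}

/-- `R` is the Nichols algebra of `V = R(1)` iff it is pre-Nichols and its degree-one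
part coincides with the space of primitives. -/
def BGH.IsNichols {D : HopfData k J} (B : BGH k J D R) : Prop :=
  B.IsPreNichols k ∧ (B.grade 1 : Set R) = B.primitives k

end QB

namespace QB

variable (k : Type) [Field k]
variable {J : Type} [Ring J] [Algebra k J] {R : Type} [Ring R] [Algebra k R]

/-- The bosonization `𝒜 = R ⋊ J` : the (uniquely determined) ordinary Hopf algebra
structure on the vector space `R ⊗ J`, given as data subject to the defining formulas
for the product and coproduct, together with its antipode and pode. -/
structure Boson (D : HopfData k J) (B : BGH k J D R) where
  Amul : (R ⊗[k] J) →ₗ[k] (R ⊗[k] J) →ₗ[k] (R ⊗[k] J)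
  Amul_assoc : ∀ x y z, Amul (Amul x y) z = Amul x (Amul y z)
  Amul_one : ∀ x, Amul x ((1 : R) ⊗ₜ[k] (1 : J)) = x
  one_Amul : ∀ x, Amul ((1 : R) ⊗ₜ[k] (1 : J)) x = x
  Amul_def : ∀ (r s : R) (a b : J) (p : ℕ) (a1 a2 : Fin p → J),
    D.comul a = ∑ i, a1 i ⊗ₜ[k] a2 i →
    Amul (r ⊗ₜ[k] a) (s ⊗ₜ[k] b) = ∑ i, (r * B.act (a1 i) s) ⊗ₜ[k] (a2 i * b)
  Acomul : (R ⊗[k] J) →ₗ[k] (R ⊗[k] J) ⊗[k] (R ⊗[k] J)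
  Acomul_def : ∀ (r : R) (a : J) (p q u : ℕ) (r1 r2 : Fin p → R)
      (rJ : Fin p → Fin q → J) (rV : Fin p → Fin q → R) (aa1 aa2 : Fin u → J),
    B.comul r = ∑ i, r1 i ⊗ₜ[k] r2 i →
    (∀ i, B.coact (r2 i) = ∑ j, rJ i j ⊗ₜ[k] rV i j) →
    D.comul a = ∑ t, aa1 t ⊗ₜ[k] aa2 t →
    Acomul (r ⊗ₜ[k] a)
      = ∑ i, ∑ j, ∑ t, (r1 i ⊗ₜ[k] (rJ i j * aa1 t)) ⊗ₜ[k] (rV i j ⊗ₜ[k] aa2 t)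
  Acounit : (R ⊗[k] J) →ₗ[k] k
  Acounit_def : ∀ (r : R) (a : J), Acounit (r ⊗ₜ[k] a) = B.counit r * D.counit a
  Acoassoc : ∀ x, (TensorProduct.assoc k (R ⊗[k] J) (R ⊗[k] J) (R ⊗[k] J))
      ((Acomul.rTensor (R ⊗[k] J)) (Acomul x)) = (Acomul.lTensor (R ⊗[k] J)) (Acomul x)
  Acounit_comul : ∀ x, (TensorProduct.lid k (R ⊗[k] J)) ((Acounit.rTensor (R ⊗[k] J)) (Acomul x)) = x
  Acomul_counit : ∀ x, (TensorProduct.rid k (R ⊗[k] J)) ((Acounit.lTensor (R ⊗[k] J)) (Acomul x)) = x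
  Santipode : (R ⊗[k] J) →ₗ[k] (R ⊗[k] J)
  Spode : (R ⊗[k] J) →ₗ[k] (R ⊗[k] J)
  antipode_conv : ∀ (x : R ⊗[k] J) (p : ℕ) (x1 x2 : Fin p → R ⊗[k] J),
    Acomul x = ∑ i, x1 i ⊗ₜ[k] x2 i →
    ∑ i, Amul (Santipode (x1 i)) (x2 i) = Acounit x • ((1 : R) ⊗ₜ[k] (1 : J))
  conv_antipode : ∀ (x : R ⊗[k] J) (p : ℕ) (x1 x2 : Fin p → R ⊗[k] J),
    Acomul x = ∑ i, x1 i ⊗ₜ[k] x2 i →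
    ∑ i, Amul (x1 i) (Santipode (x2 i)) = Acounit x • ((1 : R) ⊗ₜ[k] (1 : J))
  pode_antipode : ∀ x, Spode (Santipode x) = x
  antipode_pode : ∀ x, Santipode (Spode x) = x

variable {K S : Type} [Ring K] [Algebra k K] [Ring S] [Algebra k S]

/-- the embedding `R → R ⊗ J`, `r ↦ r ⊗ 1` -/
def incl₁ : R →ₗ[k] R ⊗[k] J := (TensorProduct.mk k R J).flip 1

/-- the embedding `J → R ⊗ J`, `a ↦ 1 ⊗ a` -/
def incl₂ : J →ₗ[k] R ⊗[k] J := TensorProduct.mk k R J 1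

/-- the projection `π : 𝒜 → J` induced by `ε ⊗ id` -/
def proj₂ (B : BGH k J D R) : (R ⊗[k] J) →ₗ[k] J :=
  (TensorProduct.lid k J).toLinearMap ∘ₗ (B.counit.rTensor J)

end QB

namespace QB

variable (k : Type) [Field k]
variable {J : Type} [Ring J] [Algebra k J] {R : Type} [Ring R] [Algebra k R]
variable {K S : Type} [Ring K] [Algebra k K] [Ring S] [Algebra k S]

/-- The standing setup of the paper: Hopf algebras `J`, `K` with bijective antipode,
pre-Nichols algebras `R`, `S` of `V = R(1)`, `W = S(1)` in the Yetter-Drinfeld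
categories over `J`, `K`, their bosonizations `𝒜 = R ⋊ J`, `ℋ = S ⋊ K`, a skew pairing
`τ₀ : J ⊗ K → k` and the (unique) skew pairing `τ : 𝒜 ⊗ ℋ → k` extending `τ₀` with
`τ(J, W) = 0 = τ(V, K)`. -/
structure Setup (J K R S : Type) [Ring J] [Algebra k J] [Ring K] [Algebra k K]
    [Ring R] [Algebra k R] [Ring S] [Algebra k S] where
  DJ : HopfData k J
  DK : HopfData k K
  RB : BGH k J DJ R
  SB : BGH k K DK S
  RB_pre : RB.IsPreNichols k
  SB_pre : SB.IsPreNichols k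
  A : Boson k DJ RB
  H : Boson k DK SB
  τ₀ : J →ₗ[k] K →ₗ[k] k
  τ₀_mul_left : ∀ (a b : J) (x : K) (p : ℕ) (x1 x2 : Fin p → K),
    DK.comul x = ∑ i, x1 i ⊗ₜ[k] x2 i →
    τ₀ (a * b) x = ∑ i, τ₀ a (x1 i) * τ₀ b (x2 i)
  τ₀_mul_right : ∀ (a : J) (x y : K) (p : ℕ) (a1 a2 : Fin p → J),
    DJ.comul a = ∑ i, a1 i ⊗ₜ[k] a2 i →
    τ₀ a (x * y) = ∑ i, τ₀ (a1 i) y * τ₀ (a2 i) x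
  τ₀_one_left : ∀ x : K, τ₀ 1 x = DK.counit x
  τ₀_one_right : ∀ a : J, τ₀ a 1 = DJ.counit a
  τ : (R ⊗[k] J) →ₗ[k] (S ⊗[k] K) →ₗ[k] k
  τ_mul_left : ∀ (x y : R ⊗[k] J) (z : S ⊗[k] K) (p : ℕ) (z1 z2 : Fin p → S ⊗[k] K),
    H.Acomul z = ∑ i, z1 i ⊗ₜ[k] z2 i →
    τ (A.Amul x y) z = ∑ i, τ x (z1 i) * τ y (z2 i)
  τ_mul_right : ∀ (x : R ⊗[k] J) (y z : S ⊗[k] K) (p : ℕ) (x1 x2 : Fin p → R ⊗[k] J),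
    A.Acomul x = ∑ i, x1 i ⊗ₜ[k] x2 i →
    τ x (H.Amul y z) = ∑ i, τ (x1 i) z * τ (x2 i) y
  τ_one_left : ∀ z : S ⊗[k] K, τ ((1 : R) ⊗ₜ[k] (1 : J)) z = H.Acounit z
  τ_one_right : ∀ x : R ⊗[k] J, τ x ((1 : S) ⊗ₜ[k] (1 : K)) = A.Acounit x
  τ_ext : ∀ (a : J) (x : K), τ ((1 : R) ⊗ₜ[k] a) ((1 : S) ⊗ₜ[k] x) = τ₀ a x
  τ_JW : ∀ (a : J) (w : S), w ∈ SB.grade 1 → τ ((1 : R) ⊗ₜ[k] a) (w ⊗ₜ[k] (1 : K)) = 0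
  τ_VK : ∀ (v : R) (x : K), v ∈ RB.grade 1 → τ (v ⊗ₜ[k] (1 : J)) ((1 : S) ⊗ₜ[k] x) = 0

variable {k}

/-- The restriction `τ_{RS} : R ⊗ S → k` of `τ`, as a bilinear form. -/
def Setup.tauRS (St : Setup k J K R S) : R →ₗ[k] S →ₗ[k] k :=
  LinearMap.compl₂ (St.τ ∘ₗ incl₁ k) (incl₁ k)

/-- The action `s ▷ r = τ(r₍₁₎, s) r₍₂₎` of `S` on `R` (formula (3.4)). -/
def Setup.sAct (St : Setup k J K R S) (s : S) : R →ₗ[k] R :=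
  (TensorProduct.lid k R).toLinearMap ∘ₗ
    (LinearMap.rTensor R (St.tauRS.flip s)) ∘ₗ St.RB.comul

/-- The generalized `q`-boson algebra `ℬ`: the (uniquely determined) deformed algebra
structure on `R ⊗ S`, given as data subject to the defining relations (3.2), (3.3). -/
structure QBosonAlg (St : Setup k J K R S) where
  Bmul : (R ⊗[k] S) →ₗ[k] (R ⊗[k] S) →ₗ[k] (R ⊗[k] S)
  Bmul_assoc : ∀ x y z, Bmul (Bmul x y) z = Bmul x (Bmul y z)
  Bmul_one : ∀ x, Bmul x ((1 : R) ⊗ₜ[k] (1 : S)) = x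
  one_Bmul : ∀ x, Bmul ((1 : R) ⊗ₜ[k] (1 : S)) x = x
  mul_rr : ∀ r r' : R, Bmul (r ⊗ₜ[k] (1 : S)) (r' ⊗ₜ[k] (1 : S)) = (r * r') ⊗ₜ[k] (1 : S)
  mul_ss : ∀ s s' : S, Bmul ((1 : R) ⊗ₜ[k] s) ((1 : R) ⊗ₜ[k] s') = (1 : R) ⊗ₜ[k] (s * s')
  mul_rs : ∀ (r : R) (s : S), Bmul (r ⊗ₜ[k] (1 : S)) ((1 : R) ⊗ₜ[k] s) = r ⊗ₜ[k] s
  mul_wv : ∀ (v : R) (w : S), v ∈ St.RB.grade 1 → w ∈ St.SB.grade 1 →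
    ∀ (p q : ℕ) (vJ : Fin p → J) (vV : Fin p → R) (wK : Fin q → K) (wW : Fin q → S),
    St.RB.coact v = ∑ i, vJ i ⊗ₜ[k] vV i →
    St.SB.coact w = ∑ j, wK j ⊗ₜ[k] wW j →
    Bmul ((1 : R) ⊗ₜ[k] w) (v ⊗ₜ[k] (1 : S))
      = (∑ i, ∑ j, St.τ₀ (vJ i) (wK j) • (vV i ⊗ₜ[k] wW j))
        + St.τ (v ⊗ₜ[k] (1 : J)) (w ⊗ₜ[k] (1 : K)) • ((1 : R) ⊗ₜ[k] (1 : S))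

/-- Non-degeneracy of a bilinear form. -/
def Nondeg {M N : Type} [AddCommGroup M] [Module k M] [AddCommGroup N] [Module k N]
    (φ : M →ₗ[k] N →ₗ[k] k) : Prop :=
  (∀ m : M, (∀ n : N, φ m n = 0) → m = 0) ∧ (∀ n : N, (∀ m : M, φ m n = 0) → n = 0)

end QB

namespace QB

variable {k : Type} [Field k]
variable {J : Type} [Ring J] [Algebra k J] {R : Type} [Ring R] [Algebra k R]
variable {K S : Type} [Ring K] [Algebra k K] [Ring S] [Algebra k S]

/-!
Every value of `τ` is computed by factoring `r ⊗ a = (r ⊗ 1)(1 ⊗ a)` in `𝒜` and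
`s ⊗ x = (s ⊗ 1)(1 ⊗ x)` in `ℋ` and expanding with the skew-pairing rules and the coproduct
of the bosonization. The base cases `τ(r, x) = ε(r) ε(x)` and `τ(a, s) = ε(a) ε(s)` hold on
the degree-one generators because `τ(V, K) = 0 = τ(J, W)` and `ε(V) = 0`, and they propagate
multiplicatively since `R` and `S` are generated in degree one. For (iii) one additionally uses
that the adjoint action of `K` on `S` inside `ℋ` is the given one,
`(y ⊳ t) ⊗ 1 = y₁ (t ⊗ 1) 𝒮(y₂)`; pairing this with `r` gives
`τ(r, y ⊳ t) = τ₀(r_J, 𝒮(y)) τ(r_R, t)`, and `𝒮(𝒮̄(y)) = y` turns this into (iii).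
-/

section TensorSums

variable {M N P : Type} [AddCommGroup M] [Module k M] [AddCommGroup N] [Module k N]
  [AddCommGroup P] [Module k P]

theorem exists_sum_tmul_eq_of_le {t : M ⊗[k] N} {p q : ℕ} (hpq : p ≤ q)
    {m : Fin p → M} {n : Fin p → N} (ht : t = ∑ i, m i ⊗ₜ[k] n i) :
    ∃ (m' : Fin q → M) (n' : Fin q → N), t = ∑ j, m' j ⊗ₜ[k] n' j := by
  obtain ⟨d, rfl⟩ := Nat.exists_eq_add_of_le hpq
  exact ⟨Fin.append m 0, Fin.append n 0, by simp [ht, Fin.sum_univ_add]⟩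

theorem exists_sum_tmul_eq_family {ι : Type} [Fintype ι] (f : ι → M ⊗[k] N) :
    ∃ (q : ℕ) (m : ι → Fin q → M) (n : ι → Fin q → N),
      ∀ i, f i = ∑ j, m i j ⊗ₜ[k] n i j := by
  choose p m n h using fun i => TensorProduct.exists_sum_tmul_eq (f i)
  choose m' n' h' using fun i =>
    exists_sum_tmul_eq_of_le (Finset.le_sup (Finset.mem_univ i)) (h i)
  exact ⟨_, m', n', h'⟩

theorem sum_apply_eq_lift {ι : Type} [Fintype ι] {t : M ⊗[k] N} {m : ι → M} {n : ι → N}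
    (ht : t = ∑ i, m i ⊗ₜ[k] n i) (B : M →ₗ[k] N →ₗ[k] P) :
    ∑ i, B (m i) (n i) = TensorProduct.lift B t := by
  simp [ht]

end TensorSums

theorem sum_filter_eq_zero_of_iSupIndep {M : Type} [AddCommGroup M] [Module k M]
    {𝒜 : ℕ → Submodule k M} (h𝒜 : iSupIndep 𝒜) {m n : ℕ} (hmn : m ≠ n)
    {ι : Type} [Fintype ι] {d : ι → ℕ} {z : ι → M} (hd : ∀ i, d i = m ∨ d i = n)
    (hz : ∀ i, z i ∈ 𝒜 (d i)) (hsum : ∑ i, z i ∈ 𝒜 n) :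
    ∑ i with d i = m, z i = 0 := by
  classical
  have hm : ∀ i ∈ Finset.univ.filter (d · = m), z i ∈ 𝒜 m := fun i hi =>
    (Finset.mem_filter.1 hi).2 ▸ hz i
  have hn : ∀ i ∈ (Finset.univ.filter (d · = m))ᶜ, z i ∈ 𝒜 n := fun i hi => by
    have : d i ≠ m := by simpa using hi
    exact (hd i).resolve_left this ▸ hz i
  refine Submodule.disjoint_def.1 (h𝒜.pairwiseDisjoint hmn) _ (Submodule.sum_mem _ hm) ?_
  rw [← Finset.sum_add_sum_compl (Finset.univ.filter (d · = m))] at hsum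
  exact (Submodule.add_mem_iff_left _ (Submodule.sum_mem _ hn)).1 hsum

section Counit

variable {H M : Type} [Ring H] [Algebra k H] [AddCommGroup M] [Module k M]

theorem HopfData.sum_counit_smul_fst (D : HopfData k H) {a : H} {p : ℕ} {a1 a2 : Fin p → H}
    (h : D.comul a = ∑ i, a1 i ⊗ₜ[k] a2 i) (f : H →ₗ[k] M) :
    ∑ i, D.counit (a1 i) • f (a2 i) = f a := by
  have ha := D.counit_comul a
  simp only [h, map_sum, LinearMap.rTensor_tmul, TensorProduct.lid_tmul] at ha
  simp [← ha]

theorem HopfData.sum_counit_smul_snd (D : HopfData k H) {a : H} {p : ℕ} {a1 a2 : Fin p → H}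
    (h : D.comul a = ∑ i, a1 i ⊗ₜ[k] a2 i) (f : H →ₗ[k] M) :
    ∑ i, D.counit (a2 i) • f (a1 i) = f a := by
  have ha := D.comul_counit a
  simp only [h, map_sum, LinearMap.lTensor_tmul, TensorProduct.rid_tmul] at ha
  simp [← ha]

variable {D : HopfData k J} (B : BGH k J D R)

theorem BGH.sum_counit_smul_fst {r : R} {p : ℕ} {r1 r2 : Fin p → R}
    (h : B.comul r = ∑ i, r1 i ⊗ₜ[k] r2 i) (f : R →ₗ[k] M) :
    ∑ i, B.counit (r1 i) • f (r2 i) = f r := by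
  have hr := B.counit_comul r
  simp only [h, map_sum, LinearMap.rTensor_tmul, TensorProduct.lid_tmul] at hr
  simp [← hr]

theorem BGH.sum_counit_smul_snd {r : R} {p : ℕ} {r1 r2 : Fin p → R}
    (h : B.comul r = ∑ i, r1 i ⊗ₜ[k] r2 i) (f : R →ₗ[k] M) :
    ∑ i, B.counit (r2 i) • f (r1 i) = f r := by
  have hr := B.comul_counit r
  simp only [h, map_sum, LinearMap.lTensor_tmul, TensorProduct.rid_tmul] at hr
  simp [← hr]

theorem BGH.sum_counit_smul_coact_fst {r : R} {p : ℕ} {rJ : Fin p → J} {rV : Fin p → R}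
    (h : B.coact r = ∑ i, rJ i ⊗ₜ[k] rV i) (f : R →ₗ[k] M) :
    ∑ i, D.counit (rJ i) • f (rV i) = f r := by
  have hr := B.coact_counit r
  simp only [h, map_sum, LinearMap.rTensor_tmul, TensorProduct.lid_tmul] at hr
  simp [← hr]

theorem BGH.sum_counit_smul_coact_snd {r : R} {p : ℕ} {rJ : Fin p → J} {rV : Fin p → R}
    (h : B.coact r = ∑ i, rJ i ⊗ₜ[k] rV i) (f : J →ₗ[k] M) :
    ∑ i, B.counit (rV i) • f (rJ i) = B.counit r • f 1 := by
  simpa using congrArg f (B.counit_coact r p rJ rV h)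

theorem BGH.sum_sum_counit_smul_apply_one {r : R} {p q : ℕ} {r1 r2 : Fin p → R}
    {ρJ : Fin p → Fin q → J} {ρV : Fin p → Fin q → R}
    (hr : B.comul r = ∑ u, r1 u ⊗ₜ[k] r2 u)
    (hρ : ∀ u, B.coact (r2 u) = ∑ w, ρJ u w ⊗ₜ[k] ρV u w)
    (F : R →ₗ[k] J →ₗ[k] M) :
    ∑ u, ∑ w, B.counit (ρV u w) • F (r1 u) (ρJ u w) = F r 1 := by
  simp_rw [B.sum_counit_smul_coact_snd (hρ _) (F _)]
  exact B.sum_counit_smul_snd hr (F.flip 1)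

theorem BGH.sum_counit_smul_sum_coact {r : R} {p q n : ℕ} {r1 r2 : Fin p → R}
    {ρJ : Fin p → Fin q → J} {ρV : Fin p → Fin q → R} {rJ : Fin n → J} {rV : Fin n → R}
    (hr : B.comul r = ∑ u, r1 u ⊗ₜ[k] r2 u)
    (hρ : ∀ u, B.coact (r2 u) = ∑ w, ρJ u w ⊗ₜ[k] ρV u w)
    (hco : B.coact r = ∑ i, rJ i ⊗ₜ[k] rV i) (F : J →ₗ[k] R →ₗ[k] M) :
    ∑ u, B.counit (r1 u) • ∑ w, F (ρJ u w) (ρV u w) = ∑ i, F (rJ i) (rV i) := by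
  simp_rw [sum_apply_eq_lift (hρ _) F, sum_apply_eq_lift hco F]
  exact B.sum_counit_smul_fst hr (TensorProduct.lift F ∘ₗ B.coact)

theorem BGH.counit_eq_zero_of_mem_grade_one {r : R} (hr : r ∈ B.grade 1) : B.counit r = 0 := by
  classical
  obtain ⟨p, d, e, x, y, hdeg, hcomul⟩ := B.comul_grade r hr
  -- each term of `Δ r` has bidegree `(0, 1)` or `(1, 0)`, so the degree-zero parts of
  -- `r = ∑ ε(yᵢ) xᵢ = ∑ ε(xᵢ) yᵢ` vanish
  have hindep := B.internal.submodule_iSupIndep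
  have hd : ∀ i, d i = 0 ∨ d i = 1 := fun i => by have := (hdeg i).1; omega
  have he : ∀ i, e i = 0 ∨ e i = 1 := fun i => by have := (hdeg i).1; omega
  have hx : ∑ i with d i = 0, B.counit (y i) • x i = 0 :=
    sum_filter_eq_zero_of_iSupIndep hindep zero_ne_one hd
      (fun i => Submodule.smul_mem _ _ (hdeg i).2.1)
      (by convert hr using 1; simpa using B.sum_counit_smul_snd hcomul LinearMap.id)
  have hy : ∑ i with e i = 0, B.counit (x i) • y i = 0 :=
    sum_filter_eq_zero_of_iSupIndep hindep zero_ne_one he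
      (fun i => Submodule.smul_mem _ _ (hdeg i).2.2)
      (by convert hr using 1; simpa using B.sum_counit_smul_fst hcomul LinearMap.id)
  have hfilter : Finset.univ.filter (e · = 0) = (Finset.univ.filter (d · = 0))ᶜ := by
    ext i; have := (hdeg i).1; simp; omega
  calc B.counit r = ∑ i, B.counit (x i) * B.counit (y i) := by
        simpa using (B.sum_counit_smul_fst hcomul B.counit).symm
    _ = B.counit (∑ i with d i = 0, B.counit (y i) • x i)
          + B.counit (∑ i with e i = 0, B.counit (x i) • y i) := by
        rw [hfilter, map_sum, map_sum, ← Finset.sum_add_sum_compl (Finset.univ.filter (d · = 0))]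
        simp [mul_comm]
    _ = 0 := by rw [hx, hy, map_zero, add_zero]

end Counit

theorem HopfData.sum_sum_tmul_mul_antipode {H : Type} [Ring H] [Algebra k H]
    (D : HopfData k H) {y : H} {p q : ℕ} {y1 y2 : Fin p → H} {y11 y12 : Fin p → Fin q → H}
    (hy : D.comul y = ∑ c, y1 c ⊗ₜ[k] y2 c)
    (hy1 : ∀ c, D.comul (y1 c) = ∑ e, y11 c e ⊗ₜ[k] y12 c e) :
    ∑ c, ∑ e, y11 c e ⊗ₜ[k] (y12 c e * D.antipode (y2 c)) = y ⊗ₜ[k] (1 : H) := by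
  have h := congrArg (LinearMap.lTensor H (LinearMap.mul' k H ∘ₗ D.antipode.lTensor H))
    (D.coassoc y)
  simp only [hy, hy1, map_sum, LinearMap.rTensor_tmul, TensorProduct.sum_tmul,
    TensorProduct.assoc_tmul, LinearMap.lTensor_tmul, LinearMap.comp_apply,
    LinearMap.mul'_apply] at h
  rw [h]
  simp_rw [D.conv_antipode, TensorProduct.tmul_smul, TensorProduct.smul_tmul',
    ← TensorProduct.sum_tmul]
  simpa using congrArg (· ⊗ₜ[k] (1 : H)) (D.sum_counit_smul_snd hy LinearMap.id)

section Bosonization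

variable {D : HopfData k J} {B : BGH k J D R} (A : Boson k D B)

theorem Boson.Amul_tmul_one_tmul (r s : R) (b : J) :
    A.Amul (r ⊗ₜ[k] (1 : J)) (s ⊗ₜ[k] b) = (r * s) ⊗ₜ[k] b := by
  simpa [B.act_one] using
    A.Amul_def r s 1 b 1 (fun _ => 1) (fun _ => 1) (by simp [D.comul_one])

theorem Boson.tmul_eq_Amul (r : R) (a : J) :
    r ⊗ₜ[k] a = A.Amul (r ⊗ₜ[k] (1 : J)) ((1 : R) ⊗ₜ[k] a) := by
  rw [A.Amul_tmul_one_tmul, mul_one]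

theorem Boson.Acomul_one_tmul {a : J} {p : ℕ} {a1 a2 : Fin p → J}
    (h : D.comul a = ∑ i, a1 i ⊗ₜ[k] a2 i) :
    A.Acomul ((1 : R) ⊗ₜ[k] a) = ∑ i, ((1 : R) ⊗ₜ[k] a1 i) ⊗ₜ[k] ((1 : R) ⊗ₜ[k] a2 i) := by
  simpa using A.Acomul_def 1 a 1 1 p (fun _ => 1) (fun _ => 1) (fun _ _ => 1) (fun _ _ => 1)
    a1 a2 (by simp [B.comul_one]) (fun _ => by simp [B.coact_one]) h

theorem Boson.Acomul_tmul_one {r : R} {p q : ℕ} {r1 r2 : Fin p → R}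
    {rJ : Fin p → Fin q → J} {rV : Fin p → Fin q → R}
    (h : B.comul r = ∑ i, r1 i ⊗ₜ[k] r2 i)
    (hco : ∀ i, B.coact (r2 i) = ∑ j, rJ i j ⊗ₜ[k] rV i j) :
    A.Acomul (r ⊗ₜ[k] (1 : J))
      = ∑ i, ∑ j, (r1 i ⊗ₜ[k] rJ i j) ⊗ₜ[k] (rV i j ⊗ₜ[k] (1 : J)) := by
  simpa using A.Acomul_def r 1 p q 1 r1 r2 rJ rV (fun _ => 1) (fun _ => 1) h hco
    (by simp [D.comul_one])

/-- The adjoint action of `J` on `R` inside `R ⋊ J`: `(y ⊳ t) ⊗ 1 = y₁ (t ⊗ 1) 𝒮(y₂)`. -/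
theorem Boson.act_tmul_one_eq_sum {y : J} {p : ℕ} {y1 y2 : Fin p → J}
    (hy : D.comul y = ∑ c, y1 c ⊗ₜ[k] y2 c) (t : R) :
    B.act y t ⊗ₜ[k] (1 : J)
      = ∑ c, A.Amul ((1 : R) ⊗ₜ[k] y1 c) (t ⊗ₜ[k] D.antipode (y2 c)) := by
  obtain ⟨q, y11, y12, hy1⟩ := exists_sum_tmul_eq_family fun c => D.comul (y1 c)
  have h := congrArg (LinearMap.rTensor J (B.act.flip t)) (D.sum_sum_tmul_mul_antipode hy hy1)
  simp only [map_sum, LinearMap.rTensor_tmul, LinearMap.flip_apply] at h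
  rw [← h]
  refine Finset.sum_congr rfl fun c _ => ?_
  simpa using (A.Amul_def 1 t (y1 c) (D.antipode (y2 c)) q (y11 c) (y12 c) (hy1 c)).symm

end Bosonization

section Pairing

variable (St : Setup k J K R S)

theorem Setup.tauRS_apply (r : R) (s : S) :
    St.tauRS r s = St.τ (r ⊗ₜ[k] (1 : J)) (s ⊗ₜ[k] (1 : K)) := rfl

theorem Setup.τ_mul_left_eq_lift (x y : R ⊗[k] J) (z : S ⊗[k] K) :
    St.τ (St.A.Amul x y) z
      = TensorProduct.lift ((LinearMap.mul k k).compl₁₂ (St.τ x) (St.τ y)) (St.H.Acomul z) := by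
  obtain ⟨p, z1, z2, h⟩ := TensorProduct.exists_sum_tmul_eq (St.H.Acomul z)
  rw [St.τ_mul_left x y z p z1 z2 h, h]
  simp

theorem Setup.τ_mul_right_eq_lift (x : R ⊗[k] J) (y z : S ⊗[k] K) :
    St.τ x (St.H.Amul y z)
      = TensorProduct.lift ((LinearMap.mul k k).compl₁₂ (St.τ.flip z) (St.τ.flip y))
          (St.A.Acomul x) := by
  obtain ⟨p, x1, x2, h⟩ := TensorProduct.exists_sum_tmul_eq (St.A.Acomul x)
  rw [St.τ_mul_right x y z p x1 x2 h, h]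
  simp

theorem Setup.τ_tmul_one_one_tmul (r : R) (x : K) :
    St.τ (r ⊗ₜ[k] (1 : J)) ((1 : S) ⊗ₜ[k] x) = St.RB.counit r * St.DK.counit x := by
  have hr : r ∈ Algebra.adjoin k (St.RB.grade 1 : Set R) := Algebra.eq_top_iff.1 St.RB_pre r
  induction hr using Algebra.adjoin_induction generalizing x with
  | mem v hv => rw [St.τ_VK v x hv, St.RB.counit_eq_zero_of_mem_grade_one hv, zero_mul]
  | algebraMap c =>
    rw [Algebra.algebraMap_eq_smul_one, ← TensorProduct.smul_tmul', map_smul,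
      LinearMap.smul_apply, St.τ_one_left, St.H.Acounit_def, map_smul, St.RB.counit_one,
      St.SB.counit_one, one_mul, smul_eq_mul, smul_eq_mul, mul_one]
  | add a b _ _ ha hb => rw [TensorProduct.add_tmul, map_add, LinearMap.add_apply, ha, hb,
      map_add, add_mul]
  | mul a b _ _ ha hb =>
    obtain ⟨q, x1, x2, hx⟩ := TensorProduct.exists_sum_tmul_eq (St.DK.comul x)
    rw [← St.A.Amul_tmul_one_tmul, St.τ_mul_left _ _ _ q _ _ (St.H.Acomul_one_tmul hx),
      St.RB.counit_mul, ← St.DK.sum_counit_smul_fst hx St.DK.counit, Finset.mul_sum]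
    simp only [ha, hb, smul_eq_mul]
    exact Finset.sum_congr rfl fun i _ => by ring

theorem Setup.τ_one_tmul_tmul_one (a : J) (s : S) :
    St.τ ((1 : R) ⊗ₜ[k] a) (s ⊗ₜ[k] (1 : K)) = St.DJ.counit a * St.SB.counit s := by
  have hs : s ∈ Algebra.adjoin k (St.SB.grade 1 : Set S) := Algebra.eq_top_iff.1 St.SB_pre s
  induction hs using Algebra.adjoin_induction generalizing a with
  | mem w hw => rw [St.τ_JW a w hw, St.SB.counit_eq_zero_of_mem_grade_one hw, mul_zero]
  | algebraMap c =>
    rw [Algebra.algebraMap_eq_smul_one, ← TensorProduct.smul_tmul', map_smul, St.τ_ext,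
      St.τ₀_one_right, map_smul, St.SB.counit_one, smul_eq_mul, smul_eq_mul, mul_one, mul_comm]
  | add u v _ _ hu hv => rw [TensorProduct.add_tmul, map_add, hu, hv, map_add, mul_add]
  | mul u v _ _ hu hv =>
    obtain ⟨p, a1, a2, ha⟩ := TensorProduct.exists_sum_tmul_eq (St.DJ.comul a)
    rw [← St.H.Amul_tmul_one_tmul, St.τ_mul_right _ _ _ p _ _ (St.A.Acomul_one_tmul ha),
      St.SB.counit_mul, ← St.DJ.sum_counit_smul_fst ha St.DJ.counit, Finset.sum_mul]
    simp only [hu, hv, smul_eq_mul]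
    exact Finset.sum_congr rfl fun i _ => by ring

theorem Setup.τ_tmul_one_tmul_eq_counit_mul (r : R) (a : J) (x : K) :
    St.τ (r ⊗ₜ[k] a) ((1 : S) ⊗ₜ[k] x) = St.RB.counit r * St.τ₀ a x := by
  obtain ⟨q, x1, x2, hx⟩ := TensorProduct.exists_sum_tmul_eq (St.DK.comul x)
  rw [St.A.tmul_eq_Amul r a, St.τ_mul_left _ _ _ q _ _ (St.H.Acomul_one_tmul hx),
    ← St.DK.sum_counit_smul_fst hx (St.τ₀ a), Finset.mul_sum]
  simp only [St.τ_tmul_one_one_tmul, St.τ_ext, smul_eq_mul, mul_assoc]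

theorem Setup.τ_one_tmul_tmul (a : J) (s : S) (x : K) :
    St.τ ((1 : R) ⊗ₜ[k] a) (s ⊗ₜ[k] x) = St.SB.counit s * St.τ₀ a x := by
  obtain ⟨p, a1, a2, ha⟩ := TensorProduct.exists_sum_tmul_eq (St.DJ.comul a)
  have hτ₀ := St.DJ.sum_counit_smul_snd ha (St.τ₀.flip x)
  simp only [LinearMap.flip_apply, smul_eq_mul] at hτ₀
  rw [St.H.tmul_eq_Amul s x, St.τ_mul_right _ _ _ p _ _ (St.A.Acomul_one_tmul ha), ← hτ₀,
    Finset.mul_sum]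
  simp only [St.τ_one_tmul_tmul_one, St.τ_ext]
  exact Finset.sum_congr rfl fun i _ => by ring

theorem Setup.τ_tmul_one_tmul_eq_sum {r : R} {n : ℕ} {rJ : Fin n → J} {rV : Fin n → R}
    (h : St.RB.coact r = ∑ i, rJ i ⊗ₜ[k] rV i) (s : S) (x : K) :
    St.τ (r ⊗ₜ[k] (1 : J)) (s ⊗ₜ[k] x) = ∑ i, St.τ₀ (rJ i) x * St.tauRS (rV i) s := by
  obtain ⟨p, r1, r2, hr⟩ := TensorProduct.exists_sum_tmul_eq (St.RB.comul r)
  obtain ⟨q, ρJ, ρV, hρ⟩ := exists_sum_tmul_eq_family fun u => St.RB.coact (r2 u)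
  refine Eq.trans ?_ (St.RB.sum_counit_smul_sum_coact hr hρ h
    ((LinearMap.mul k k).compl₁₂ (St.τ₀.flip x) (St.tauRS.flip s)))
  rw [St.H.tmul_eq_Amul s x, St.τ_mul_right_eq_lift, St.A.Acomul_tmul_one hr hρ]
  simp [St.τ_tmul_one_tmul_eq_counit_mul, St.tauRS_apply, Finset.mul_sum, mul_assoc]

theorem Setup.τ_tmul_tmul_eq_sum_τ_tmul_one {x : K} {q : ℕ} {x1 x2 : Fin q → K}
    (hx : St.DK.comul x = ∑ j, x1 j ⊗ₜ[k] x2 j) (r : R) (a : J) (s : S) :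
    St.τ (r ⊗ₜ[k] a) (s ⊗ₜ[k] x)
      = ∑ j, St.τ (r ⊗ₜ[k] (1 : J)) (s ⊗ₜ[k] x1 j) * St.τ₀ a (x2 j) := by
  obtain ⟨p, s1, s2, hs⟩ := TensorProduct.exists_sum_tmul_eq (St.SB.comul s)
  obtain ⟨m, σK, σW, hσ⟩ := exists_sum_tmul_eq_family fun u => St.SB.coact (s2 u)
  have hcontract := fun j : Fin q => St.SB.sum_sum_counit_smul_apply_one hs hσ
    (((TensorProduct.mk k S K).compl₂ (LinearMap.mulRight k (x1 j))).compr₂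
      (St.τ (r ⊗ₜ[k] (1 : J))))
  simp only [LinearMap.compr₂_apply, LinearMap.compl₂_apply, TensorProduct.mk_apply,
    LinearMap.mulRight_apply, one_mul, smul_eq_mul] at hcontract
  simp_rw [← hcontract, Finset.sum_mul]
  rw [St.A.tmul_eq_Amul r a, St.τ_mul_left_eq_lift,
    St.H.Acomul_def s x p m q s1 s2 σK σW x1 x2 hs hσ hx]
  simp only [map_sum, TensorProduct.lift.tmul, LinearMap.compl₁₂_apply, LinearMap.mul_apply',
    St.τ_one_tmul_tmul]
  conv_rhs => rw [Finset.sum_comm]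
  refine Finset.sum_congr rfl fun u _ => ?_
  conv_rhs => rw [Finset.sum_comm]
  exact Finset.sum_congr rfl fun w _ => Finset.sum_congr rfl fun j _ => by ring

theorem Setup.τ_tmul_tmul {r : R} {p q : ℕ} {rJ : Fin p → J} {rV : Fin p → R}
    {x : K} {x1 x2 : Fin q → K} (hr : St.RB.coact r = ∑ i, rJ i ⊗ₜ[k] rV i)
    (hx : St.DK.comul x = ∑ j, x1 j ⊗ₜ[k] x2 j) (a : J) (s : S) :
    St.τ (r ⊗ₜ[k] a) (s ⊗ₜ[k] x)
      = ∑ i, ∑ j, St.τ₀ (rJ i) (x1 j) * St.tauRS (rV i) s * St.τ₀ a (x2 j) := by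
  simp_rw [St.τ_tmul_tmul_eq_sum_τ_tmul_one hx, St.τ_tmul_one_tmul_eq_sum hr, Finset.sum_mul]
  exact Finset.sum_comm

theorem Setup.τ_tmul_tmul_one (r : R) (a : J) (s : S) :
    St.τ (r ⊗ₜ[k] a) (s ⊗ₜ[k] (1 : K)) = St.tauRS r s * St.DJ.counit a := by
  obtain ⟨p, rJ, rV, hr⟩ := TensorProduct.exists_sum_tmul_eq (St.RB.coact r)
  have hcontract := St.RB.sum_counit_smul_coact_fst hr (St.tauRS.flip s)
  simp only [LinearMap.flip_apply, smul_eq_mul] at hcontract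
  rw [St.τ_tmul_tmul hr (q := 1) (x1 := 1) (x2 := 1) (by simp [St.DK.comul_one]),
    ← hcontract, Finset.sum_mul]
  simp [St.τ₀_one_right]

theorem Setup.tauRS_mul_right {r : R} {p : ℕ} {r1 r2 : Fin p → R}
    (hr : St.RB.comul r = ∑ i, r1 i ⊗ₜ[k] r2 i) (s s' : S) :
    St.tauRS r (s * s') = ∑ i, St.tauRS (r1 i) s' * St.tauRS (r2 i) s := by
  obtain ⟨q, ρJ, ρV, hρ⟩ := exists_sum_tmul_eq_family fun i => St.RB.coact (r2 i)
  rw [St.tauRS_apply, ← St.H.Amul_tmul_one_tmul, St.τ_mul_right_eq_lift,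
    St.A.Acomul_tmul_one hr hρ]
  simp only [map_sum, TensorProduct.lift.tmul, LinearMap.compl₁₂_apply, LinearMap.mul_apply',
    LinearMap.flip_apply, St.τ_tmul_tmul_one]
  refine Finset.sum_congr rfl fun i _ => ?_
  have hcontract := St.RB.sum_counit_smul_coact_fst (hρ i) (St.tauRS.flip s)
  simp only [LinearMap.flip_apply, smul_eq_mul] at hcontract
  rw [← hcontract, Finset.mul_sum]
  exact Finset.sum_congr rfl fun w _ => by rw [St.DJ.counit_one]; ring

theorem Setup.τ_tmul_one_Amul_one_tmul (r : R) (y : K) (z : S ⊗[k] K) :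
    St.τ (r ⊗ₜ[k] (1 : J)) (St.H.Amul ((1 : S) ⊗ₜ[k] y) z)
      = St.DK.counit y * St.τ (r ⊗ₜ[k] (1 : J)) z := by
  obtain ⟨p, r1, r2, hr⟩ := TensorProduct.exists_sum_tmul_eq (St.RB.comul r)
  obtain ⟨q, ρJ, ρV, hρ⟩ := exists_sum_tmul_eq_family fun u => St.RB.coact (r2 u)
  have hcontract := St.RB.sum_sum_counit_smul_apply_one hr hρ
    ((TensorProduct.mk k R J).compr₂ (St.τ.flip z))
  simp only [LinearMap.compr₂_apply, TensorProduct.mk_apply, LinearMap.flip_apply,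
    smul_eq_mul] at hcontract
  rw [← hcontract, St.τ_mul_right_eq_lift, St.A.Acomul_tmul_one hr hρ, Finset.mul_sum]
  simp only [map_sum, TensorProduct.lift.tmul, LinearMap.compl₁₂_apply, LinearMap.mul_apply',
    LinearMap.flip_apply, St.τ_tmul_one_one_tmul, Finset.mul_sum]
  exact Finset.sum_congr rfl fun u _ => Finset.sum_congr rfl fun w _ => by ring

theorem Setup.tauRS_act {r : R} {n : ℕ} {rJ : Fin n → J} {rV : Fin n → R}
    (hr : St.RB.coact r = ∑ i, rJ i ⊗ₜ[k] rV i) (y : K) (t : S) :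
    St.tauRS r (St.SB.act y t) = ∑ i, St.τ₀ (rJ i) (St.DK.antipode y) * St.tauRS (rV i) t := by
  obtain ⟨p, y1, y2, hy⟩ := TensorProduct.exists_sum_tmul_eq (St.DK.comul y)
  have hcontract := St.DK.sum_counit_smul_fst hy
    (St.τ (r ⊗ₜ[k] (1 : J)) ∘ₗ TensorProduct.mk k S K t ∘ₗ St.DK.antipode)
  simp only [LinearMap.comp_apply, TensorProduct.mk_apply, smul_eq_mul] at hcontract
  rw [St.tauRS_apply, St.H.act_tmul_one_eq_sum hy, map_sum]
  simp_rw [St.τ_tmul_one_Amul_one_tmul]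
  rw [hcontract, St.τ_tmul_one_tmul_eq_sum hr]

theorem Setup.tauRS_mul_left {s : S} {p q : ℕ} {s1 s2 : Fin p → S}
    {sK : Fin p → Fin q → K} {sV : Fin p → Fin q → S}
    (hs : St.SB.comul s = ∑ i, s1 i ⊗ₜ[k] s2 i)
    (hσ : ∀ i, St.SB.coact (s2 i) = ∑ j, sK i j ⊗ₜ[k] sV i j) (r r' : R) :
    St.tauRS (r * r') s
      = ∑ i, ∑ j,
          St.tauRS r (St.SB.act (St.DK.pode (sK i j)) (s1 i)) * St.tauRS r' (sV i j) := by
  obtain ⟨n, rJ, rV, hr⟩ := TensorProduct.exists_sum_tmul_eq (St.RB.coact r)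
  rw [St.tauRS_apply, ← St.A.Amul_tmul_one_tmul, St.τ_mul_left_eq_lift,
    St.H.Acomul_tmul_one hs hσ]
  simp only [map_sum, TensorProduct.lift.tmul, LinearMap.compl₁₂_apply,
    St.τ_tmul_one_tmul_eq_sum hr, St.tauRS_act hr, St.DK.antipode_pode, ← St.tauRS_apply,
    LinearMap.sum_apply, LinearMap.mul_apply', Finset.sum_mul]

end Pairing

theorem statement6 (St : Setup k J K R S) :
    -- (2.4):  τ(ra, sx) = τ₀(r_J, x₁) τ(r_R, s) τ₀(a, x₂)
    (∀ (r : R) (a : J) (s : S) (x : K) (p q : ℕ)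
        (rJ : Fin p → J) (rV : Fin p → R) (x1 x2 : Fin q → K),
      St.RB.coact r = ∑ i, rJ i ⊗ₜ[k] rV i →
      St.DK.comul x = ∑ j, x1 j ⊗ₜ[k] x2 j →
      St.τ (r ⊗ₜ[k] a) (s ⊗ₜ[k] x)
        = ∑ i, ∑ j, St.τ₀ (rJ i) (x1 j) * St.tauRS (rV i) s * St.τ₀ a (x2 j)) ∧
    -- (2.5):  τ(r, ss') = τ(r₍₁₎, s') τ(r₍₂₎, s)
    (∀ (r : R) (s s' : S) (p : ℕ) (r1 r2 : Fin p → R),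
      St.RB.comul r = ∑ i, r1 i ⊗ₜ[k] r2 i →
      St.tauRS r (s * s') = ∑ i, St.tauRS (r1 i) s' * St.tauRS (r2 i) s) ∧
    -- (2.6):  τ(rr', s) = τ(r, 𝒮̄_K(s₍₂₎K) ⊳ s₍₁₎) τ(r', s₍₂₎S)
    (∀ (r r' : R) (s : S) (p q : ℕ) (s1 s2 : Fin p → S)
        (sK : Fin p → Fin q → K) (sV : Fin p → Fin q → S),
      St.SB.comul s = ∑ i, s1 i ⊗ₜ[k] s2 i →
      (∀ i, St.SB.coact (s2 i) = ∑ j, sK i j ⊗ₜ[k] sV i j) →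
      St.tauRS (r * r') s
        = ∑ i, ∑ j, St.tauRS r (St.SB.act (St.DK.pode (sK i j)) (s1 i))
            * St.tauRS r' (sV i j)) := by
  exact ⟨fun _ a s _ _ _ _ _ _ _ hr hx => St.τ_tmul_tmul hr hx a s,
    fun _ s s' _ _ _ hr => St.tauRS_mul_right hr s s',
    fun r r' _ _ _ _ _ _ _ hs hσ => St.tauRS_mul_left hs hσ r r'⟩

end QB
end
end

section
/- In the standing setup, assume that the adjoint map τ₁^l : V → W* of τ₁ is injective and that R is the Nichols algebra of V. Then R, regarded as a left ℬ-module via ρ (the Verma module), is a simple ℬ-module. -/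
/-!
A nonzero `ℬ`-stable subspace `N ⊆ R` contains `1`, hence is all of `R`. Take `x ∈ N`, `x ≠ 0`,
with top homogeneous component `xₙ`. For `s ∈ S(n)` the action `s ▷ x = τ(x₍₁₎, s) x₍₂₎` only
sees the bidegree `(n, 0)` part of `Δ x`, so `s ▷ x = τ(xₙ, s) • 1`, and it suffices to find
`s` with `τ(xₙ, s) ≠ 0`.

This is the nondegeneracy of `τ` on `R(n) × S(n)`, proved by induction on `n`. The pieces `R(m)`
and `S(n)` are `τ`-orthogonal for `m ≠ n`, as `R` and `S` are generated in degree one and `τ` is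
a skew pairing. If `r ∈ R(n)` lies in the radical of `τ`, so does every `s ▷ r`, because
`τ(s ▷ r, t) = τ(r, t s)`; by induction this kills the bidegree `(d, n - d)` parts of `Δ r` for
`0 < d < n`. So `r` is primitive, hence of degree one as `R` is a Nichols algebra, where the
injectivity of `τ₁^l` applies.
-/

open TensorProduct BigOperators

noncomputable section

open GradedAlgebra

namespace QB

variable {k : Type} [Field k]

section TensorProduct

variable {M N : Type} [AddCommGroup M] [Module k M] [AddCommGroup N] [Module k N]

theorem exists_fin_sum_tmul (z : M ⊗[k] N) :
    ∃ (p : ℕ) (f : Fin p → M) (g : Fin p → N), z = ∑ i, f i ⊗ₜ[k] g i := by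
  obtain ⟨s, rfl⟩ := TensorProduct.exists_finset z
  exact ⟨s.card, fun i => (s.equivFin.symm i).1.1, fun i => (s.equivFin.symm i).1.2,
    (Finset.sum_coe_sort s _).symm.trans (Fintype.sum_equiv s.equivFin _ _ fun _ => by simp)⟩

theorem exists_fin_sum_tmul_uniform {p : ℕ} (z : Fin p → M ⊗[k] N) :
    ∃ (q : ℕ) (f : Fin p → Fin q → M) (g : Fin p → Fin q → N),
      ∀ i, z i = ∑ j, f i j ⊗ₜ[k] g i j := by
  choose q f g hz using fun i => exists_fin_sum_tmul (z i)
  refine ⟨Finset.univ.sup q, fun i j => if h : (j : ℕ) < q i then f i ⟨j, h⟩ else 0,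
    fun i j => if h : (j : ℕ) < q i then g i ⟨j, h⟩ else 0, fun i => ?_⟩
  rw [hz i]
  refine Fintype.sum_of_injective (Fin.castLE (Finset.le_sup (Finset.mem_univ i)))
    (Fin.castLE_injective _) _ _ (fun j hj => ?_) (fun j => by simp)
  have : ¬ (j : ℕ) < q i := fun h => hj ⟨⟨j, h⟩, rfl⟩
  simp [this]

theorem eq_zero_of_forall_contract_eq_zero {S : Type} [AddCommGroup S] [Module k S]
    (f : M →ₗ[k] S →ₗ[k] k) (hf : ∀ m, (∀ s, f m s = 0) → m = 0) {z : M ⊗[k] N}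
    (hz : ∀ s, TensorProduct.lid k N (LinearMap.rTensor N (f.flip s) z) = 0) : z = 0 := by
  classical
  let b := Module.Basis.ofVectorSpace k N
  suffices TensorProduct.equivFinsuppOfBasisRight (M := M) b z = 0 by simpa using this
  ext i
  refine hf _ fun s => ?_
  have h := congrArg (fun x => b.repr x i) (hz s)
  rw [← (TensorProduct.equivFinsuppOfBasisRight b).symm_apply_apply z,
    TensorProduct.equivFinsuppOfBasisRight_symm_apply] at h
  by_cases hi : TensorProduct.equivFinsuppOfBasisRight b z i = 0
  · simp [hi]
  · simpa [Finsupp.sum, map_sum, Finsupp.single_apply, hi] using h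

end TensorProduct

section GradedAlgebra

variable {ι A : Type} [DecidableEq ι] [AddMonoid ι] [Ring A] [Algebra k A]
  (𝒜 : ι → Submodule k A) [GradedAlgebra 𝒜]

theorem proj_of_mem {i : ι} {x : A} (hx : x ∈ 𝒜 i) : proj 𝒜 i x = x :=
  DirectSum.decompose_of_mem_same 𝒜 hx

theorem proj_of_mem_ne {i j : ι} {x : A} (hx : x ∈ 𝒜 i) (hij : i ≠ j) : proj 𝒜 j x = 0 :=
  DirectSum.decompose_of_mem_ne 𝒜 hx hij

theorem proj_mem (i : ι) (x : A) : proj 𝒜 i x ∈ 𝒜 i :=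
  (DirectSum.decompose 𝒜 x i).2

theorem linearMap_ext_of_grade {M : Type} [AddCommGroup M] [Module k M] {f g : A →ₗ[k] M}
    (h : ∀ i, ∀ x ∈ 𝒜 i, f x = g x) : f = g :=
  LinearMap.ext <| DirectSum.Decomposition.inductionOn 𝒜 (by simp)
    (fun m => h _ _ m.2) (fun _ _ h₁ h₂ => by simp [h₁, h₂])

end GradedAlgebra

theorem exists_proj_ne_zero_sum_proj {A : Type} [Ring A] [Algebra k A]
    (𝒜 : ℕ → Submodule k A) [GradedAlgebra 𝒜] {x : A} (hx : x ≠ 0) :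
    ∃ n, proj 𝒜 n x ≠ 0 ∧ ∑ m ∈ Finset.range (n + 1), proj 𝒜 m x = x := by
  classical
  have hne : (DirectSum.decompose 𝒜 x).support.Nonempty := by
    rw [Finset.nonempty_iff_ne_empty]
    intro h
    exact hx (by simpa [h] using (DirectSum.sum_support_decompose 𝒜 x).symm)
  set n := (DirectSum.decompose 𝒜 x).support.max' hne
  refine ⟨n, (GradedAlgebra.mem_support_iff 𝒜 x n).1 (Finset.max'_mem _ hne), ?_⟩
  rw [← Finset.sum_subset (fun m hm => Finset.mem_range_succ_iff.2 (Finset.le_max' _ m hm))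
    (fun m _ hm => by simpa using hm)]
  exact DirectSum.sum_support_decompose 𝒜 x

variable {J : Type} [Ring J] [Algebra k J] {R : Type} [Ring R] [Algebra k R]

namespace BGH

variable {D : HopfData k J} (B : BGH k J D R)

instance gradedAlgebra : GradedAlgebra B.grade where
  one_mem := B.one_grade
  mul_mem _ _ _ _ := B.mul_grade
  __ := B.internal.chooseDecomposition

variable {B}

theorem rTensor_proj_comul {n : ℕ} {x : R} (hx : x ∈ B.grade n) {d : ℕ} (hd : d ≤ n) :
    (proj B.grade d).rTensor R (B.comul x) = (proj B.grade (n - d)).lTensor R (B.comul x) := by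
  obtain ⟨p, d', e, x₁, x₂, hc, hΔ⟩ := B.comul_grade x hx
  rw [hΔ, map_sum, map_sum]
  refine Finset.sum_congr rfl fun i _ => ?_
  obtain ⟨hde, h₁, h₂⟩ := hc i
  rw [LinearMap.rTensor_tmul, LinearMap.lTensor_tmul]
  by_cases h : d' i = d
  · rw [proj_of_mem _ (h ▸ h₁), proj_of_mem _ (show x₂ i ∈ B.grade (n - d) by rwa [← h, ← hde,
      Nat.add_sub_cancel_left])]
  · rw [proj_of_mem_ne _ h₁ h, proj_of_mem_ne _ h₂ (by omega), zero_tmul, tmul_zero]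

theorem sum_rTensor_proj_comul {n : ℕ} {x : R} (hx : x ∈ B.grade n) :
    ∑ d ∈ Finset.range (n + 1), (proj B.grade d).rTensor R (B.comul x) = B.comul x := by
  obtain ⟨p, d', e, x₁, x₂, hc, hΔ⟩ := B.comul_grade x hx
  simp_rw [hΔ, map_sum, LinearMap.rTensor_tmul]
  rw [Finset.sum_comm]
  refine Finset.sum_congr rfl fun i _ => ?_
  obtain ⟨hde, h₁, -⟩ := hc i
  rw [← sum_tmul, Finset.sum_eq_single_of_mem (d' i) (Finset.mem_range.2 (by omega))
    (fun d _ hd => proj_of_mem_ne _ h₁ (Ne.symm hd)), proj_of_mem _ h₁]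

theorem eq_counit_smul_one {x : R} (hx : x ∈ B.grade 0) : x = B.counit x • 1 := by
  rw [B.grade0] at hx
  obtain ⟨c, rfl⟩ := Submodule.mem_span_singleton.1 hx
  rw [map_smul, B.counit_one, smul_eq_mul, mul_one]

theorem counit_eq_zero_of_mem_grade {n : ℕ} (hn : n ≠ 0) {x : R} (hx : x ∈ B.grade n) :
    B.counit x = 0 := by
  let E : R ⊗[k] R →ₗ[k] k := LinearMap.mul' k k ∘ₗ TensorProduct.map B.counit B.counit
  calc B.counit x = B.counit (proj B.grade n (TensorProduct.lid k R
        ((B.counit.rTensor R) (B.comul x)))) := by rw [B.counit_comul, proj_of_mem _ hx]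
    _ = E ((proj B.grade (n - 0)).lTensor R (B.comul x)) := by
        induction B.comul x using TensorProduct.induction_on <;> simp_all [E]
    _ = E ((proj B.grade 0).rTensor R (B.comul x)) := by
        rw [rTensor_proj_comul hx (Nat.zero_le n)]
    _ = B.counit (proj B.grade 0 (TensorProduct.rid k R
        ((B.counit.lTensor R) (B.comul x)))) := by
        induction B.comul x using TensorProduct.induction_on <;> simp_all [E, mul_comm]
    _ = 0 := by rw [B.comul_counit, proj_of_mem_ne _ hx hn, map_zero]

theorem proj_zero_eq : proj B.grade 0 = B.counit.smulRight 1 :=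
  linearMap_ext_of_grade B.grade fun i x hx => by
    by_cases hi : i = 0
    · subst hi
      rw [proj_of_mem _ hx, LinearMap.smulRight_apply, ← eq_counit_smul_one hx]
    · rw [proj_of_mem_ne _ hx hi, LinearMap.smulRight_apply,
        counit_eq_zero_of_mem_grade hi hx, zero_smul]

theorem rTensor_proj_zero_comul (x : R) :
    (proj B.grade 0).rTensor R (B.comul x) = 1 ⊗ₜ[k] x := by
  conv_rhs => rw [← B.counit_comul x]
  rw [proj_zero_eq]
  induction B.comul x using TensorProduct.induction_on <;>
    simp_all [tmul_add, smul_tmul]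

theorem lTensor_proj_zero_comul (x : R) :
    (proj B.grade 0).lTensor R (B.comul x) = x ⊗ₜ[k] 1 := by
  conv_rhs => rw [← B.comul_counit x]
  rw [proj_zero_eq]
  induction B.comul x using TensorProduct.induction_on <;>
    simp_all [add_tmul, smul_tmul]

theorem mem_primitives_of_rTensor_proj_comul_eq_zero {n : ℕ} (hn : n ≠ 0) {x : R}
    (hx : x ∈ B.grade n)
    (hmid : ∀ d, 0 < d → d < n → (proj B.grade d).rTensor R (B.comul x) = 0) :
    x ∈ B.primitives k := by
  change B.comul x = x ⊗ₜ[k] 1 + 1 ⊗ₜ[k] x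
  rw [← sum_rTensor_proj_comul hx, Finset.sum_eq_add n 0 hn
    (fun d hd h => hmid d (by omega) (by simp at hd; omega)) (by simp) (by simp),
    rTensor_proj_comul hx le_rfl, Nat.sub_self, lTensor_proj_zero_comul,
    rTensor_proj_zero_comul]

theorem mem_primitives_of_mem_grade_one {x : R} (hx : x ∈ B.grade 1) : x ∈ B.primitives k :=
  mem_primitives_of_rTensor_proj_comul_eq_zero one_ne_zero hx fun _ h₀ h₁ => by omega

theorem grade_succ_le_mul (hB : B.IsPreNichols k) (n : ℕ) :
    B.grade (n + 1) ≤ B.grade 1 * B.grade n := by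
  intro x hx
  have hx' : x ∈ Subalgebra.toSubmodule (Algebra.adjoin k (B.grade 1 : Set R)) := by
    rw [hB]; trivial
  rw [Algebra.adjoin_eq_span] at hx'
  rw [← proj_of_mem _ hx]
  refine (Submodule.span_le (p := (B.grade 1 * B.grade n).comap (proj B.grade (n + 1)))).2
    (fun y hy => ?_) hx'
  induction hy using Submonoid.closure_induction_left with
  | one => simp [proj_of_mem_ne _ B.one_grade (Nat.succ_ne_zero n).symm]
  | mul_left v hv y _ _ =>
    simp only [SetLike.mem_coe, Submodule.mem_comap, proj_apply]
    rw [DirectSum.coe_decompose_mul_of_left_mem_of_le B.grade hv (by omega),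
      Nat.add_sub_cancel]
    exact Submodule.mul_mem_mul hv (proj_mem _ n y)

theorem IsPreNichols.linearMap_ext (hB : B.IsPreNichols k) {M : Type} [AddCommGroup M]
    [Module k M] {f g : R →ₗ[k] M} (h₁ : f 1 = g 1)
    (hmul : ∀ v ∈ B.grade 1, ∀ z, f (v * z) = g (v * z)) : f = g := by
  refine linearMap_ext_of_grade B.grade fun i => ?_
  change B.grade i ≤ LinearMap.eqLocus f g
  cases i with
  | zero => rw [B.grade0, Submodule.span_le, Set.singleton_subset_iff]; exact h₁
  | succ n =>
    exact (grade_succ_le_mul hB n).trans (Submodule.mul_le.2 fun v hv z _ => hmul v hv z)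

end BGH

section Bosonization

variable {D : HopfData k J}

/-- `r ⊗ r' ↦ (r ⊗ r'₍₋₁₎) ⊗ (r'₍₀₎ ⊗ 1)`: the coproduct of `R ⋊ J` on `R ⊗ 1` in terms of
that of `R`. -/
def BGH.toBosonTensor (B : BGH k J D R) : R ⊗[k] R →ₗ[k] (R ⊗[k] J) ⊗[k] (R ⊗[k] J) :=
  TensorProduct.map LinearMap.id (incl₁ k) ∘ₗ (TensorProduct.assoc k R J R).symm.toLinearMap ∘ₗ
    B.coact.lTensor R

theorem BGH.toBosonTensor_tmul_one (B : BGH k J D R) (r : R) :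
    B.toBosonTensor (r ⊗ₜ[k] 1) = (r ⊗ₜ[k] (1 : J)) ⊗ₜ[k] ((1 : R) ⊗ₜ[k] (1 : J)) := by
  simp [toBosonTensor, B.coact_one, incl₁]

theorem BGH.toBosonTensor_one_tmul (B : BGH k J D R) (r : R) :
    B.toBosonTensor (1 ⊗ₜ[k] r) = TensorProduct.map (incl₂ k) (incl₁ k) (B.coact r) := by
  simp only [toBosonTensor, LinearMap.coe_comp, Function.comp_apply, LinearMap.lTensor_tmul,
    LinearEquiv.coe_coe]
  induction B.coact r using TensorProduct.induction_on <;> simp_all [tmul_add, incl₂]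

namespace Boson

variable {B : BGH k J D R} (A : Boson k D B)

theorem Amul_tmul_one_tmul_one (r r' : R) :
    A.Amul (r ⊗ₜ[k] (1 : J)) (r' ⊗ₜ[k] (1 : J)) = (r * r') ⊗ₜ[k] (1 : J) := by
  rw [A.Amul_def r r' 1 1 1 (fun _ => 1) (fun _ => 1) (by rw [D.comul_one, Fin.sum_univ_one]),
    Fin.sum_univ_one, B.act_one, one_mul]

theorem Amul_tmul_one_one_tmul (r : R) (a : J) :
    A.Amul (r ⊗ₜ[k] (1 : J)) ((1 : R) ⊗ₜ[k] a) = r ⊗ₜ[k] a := by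
  rw [A.Amul_def r 1 1 a 1 (fun _ => 1) (fun _ => 1) (by rw [D.comul_one, Fin.sum_univ_one]),
    Fin.sum_univ_one, B.act_one, mul_one, one_mul]

theorem Acomul_one_tmul_s13 (a : J) :
    A.Acomul ((1 : R) ⊗ₜ[k] a) = TensorProduct.map (incl₂ k) (incl₂ k) (D.comul a) := by
  obtain ⟨u, a₁, a₂, ha⟩ := exists_fin_sum_tmul (D.comul a)
  rw [A.Acomul_def 1 a 1 1 u (fun _ => 1) (fun _ => 1) (fun _ _ => 1) (fun _ _ => 1) a₁ a₂
    (by rw [B.comul_one, Fin.sum_univ_one]) (fun _ => by rw [Fin.sum_univ_one, B.coact_one]) ha,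
    ha]
  simp [incl₂]

theorem Acomul_tmul_one_s13 (r : R) :
    A.Acomul (r ⊗ₜ[k] (1 : J)) = B.toBosonTensor (B.comul r) := by
  obtain ⟨p, r₁, r₂, h₁⟩ := exists_fin_sum_tmul (B.comul r)
  obtain ⟨q, rJ, rV, h₂⟩ := exists_fin_sum_tmul_uniform fun i => B.coact (r₂ i)
  rw [A.Acomul_def r 1 p q 1 r₁ r₂ rJ rV (fun _ => 1) (fun _ => 1) h₁ h₂
    (by rw [D.comul_one, Fin.sum_univ_one]), h₁]
  simp [BGH.toBosonTensor, h₂, tmul_sum, incl₁]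

end Boson

end Bosonization

variable {K S : Type} [Ring K] [Algebra k K] [Ring S] [Algebra k S]

namespace Setup

variable (St : Setup k J K R S)

theorem tau_Amul (x y : R ⊗[k] J) (z : S ⊗[k] K) :
    St.τ (St.A.Amul x y) z
      = TensorProduct.lift ((LinearMap.mul k k).compl₁₂ (St.τ x) (St.τ y)) (St.H.Acomul z) := by
  obtain ⟨p, z₁, z₂, hz⟩ := exists_fin_sum_tmul (St.H.Acomul z)
  rw [St.τ_mul_left x y z p z₁ z₂ hz, hz]
  simp

theorem tau_Hmul (x : R ⊗[k] J) (y z : S ⊗[k] K) :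
    St.τ x (St.H.Amul y z)
      = TensorProduct.lift ((LinearMap.mul k k).compl₁₂ (St.τ.flip z) (St.τ.flip y))
          (St.A.Acomul x) := by
  obtain ⟨p, x₁, x₂, hx⟩ := exists_fin_sum_tmul (St.A.Acomul x)
  rw [St.τ_mul_right x y z p x₁ x₂ hx, hx]
  simp

theorem tauRS_apply_s13 (r : R) (s : S) : St.tauRS r s = St.τ (r ⊗ₜ[k] 1) (s ⊗ₜ[k] 1) := rfl

theorem tauRS_one_right (r : R) : St.tauRS r 1 = St.RB.counit r := by
  rw [tauRS_apply_s13, St.τ_one_right, St.A.Acounit_def, St.DJ.counit_one, mul_one]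

theorem tauRS_one_left (s : S) : St.tauRS 1 s = St.SB.counit s := by
  rw [tauRS_apply_s13, St.τ_one_left, St.H.Acounit_def, St.DK.counit_one, mul_one]

theorem tau_one_tmul_tmul_one (a : J) (s : S) :
    St.τ ((1 : R) ⊗ₜ[k] a) (s ⊗ₜ[k] 1) = St.DJ.counit a * St.SB.counit s := by
  have h := St.SB_pre.linearMap_ext (f := St.τ ((1 : R) ⊗ₜ[k] a) ∘ₗ incl₁ k)
    (g := St.DJ.counit a • St.SB.counit)
    (by simp [incl₁, St.τ_ext, St.τ₀_one_right, St.SB.counit_one])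
    (fun w hw z => by
      have hJW : ∀ b : J, St.τ ((1 : R) ⊗ₜ[k] b) (w ⊗ₜ[k] 1) = 0 := fun b => St.τ_JW b w hw
      simp only [LinearMap.comp_apply, incl₁, LinearMap.flip_apply, TensorProduct.mk_apply,
        LinearMap.smul_apply, St.SB.counit_mul, BGH.counit_eq_zero_of_mem_grade one_ne_zero hw]
      rw [← St.H.Amul_tmul_one_tmul_one, tau_Hmul, Boson.Acomul_one_tmul_s13]
      induction St.DJ.comul a using TensorProduct.induction_on <;> simp_all [incl₂])
  exact LinearMap.congr_fun h s

theorem tau_tmul_one_one_tmul (r : R) (x : K) :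
    St.τ (r ⊗ₜ[k] 1) ((1 : S) ⊗ₜ[k] x) = St.RB.counit r * St.DK.counit x := by
  have h := St.RB_pre.linearMap_ext (f := St.τ.flip ((1 : S) ⊗ₜ[k] x) ∘ₗ incl₁ k)
    (g := St.DK.counit x • St.RB.counit)
    (by simp [incl₁, St.τ_ext, St.τ₀_one_left, St.RB.counit_one])
    (fun v hv z => by
      have hVK : ∀ y : K, St.τ (v ⊗ₜ[k] 1) ((1 : S) ⊗ₜ[k] y) = 0 := fun y => St.τ_VK v y hv
      simp only [LinearMap.comp_apply, incl₁, LinearMap.flip_apply, TensorProduct.mk_apply,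
        LinearMap.smul_apply, St.RB.counit_mul, BGH.counit_eq_zero_of_mem_grade one_ne_zero hv]
      rw [← St.A.Amul_tmul_one_tmul_one, tau_Amul, Boson.Acomul_one_tmul_s13]
      induction St.DK.comul x using TensorProduct.induction_on <;> simp_all [incl₂])
  exact (LinearMap.congr_fun h r).trans (mul_comm _ _)

theorem tau_tmul_tmul_one (r : R) (a : J) (s : S) :
    St.τ (r ⊗ₜ[k] a) (s ⊗ₜ[k] 1) = St.DJ.counit a * St.τ (r ⊗ₜ[k] 1) (s ⊗ₜ[k] 1) := by
  -- `r ⊗ b = (r ⊗ 1)(1 ⊗ b)`, and `b` only enters through `τ(1 ⊗ b, s' ⊗ 1) = ε(b) ε(s')`.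
  let G : J → (S ⊗[k] K) ⊗[k] S →ₗ[k] k := fun b =>
    TensorProduct.lift ((LinearMap.mul k k).compl₁₂ (St.τ (r ⊗ₜ[k] 1)) (St.τ (1 ⊗ₜ[k] b))) ∘ₗ
      TensorProduct.map LinearMap.id (incl₁ k)
  have hG : ∀ b, G b = St.DJ.counit b • G 1 := fun b => TensorProduct.ext' fun y v => by
    simp [G, incl₁, tau_one_tmul_tmul_one, St.DJ.counit_one, mul_left_comm]
  have hτ : ∀ b, St.τ (r ⊗ₜ[k] b) (s ⊗ₜ[k] 1) = G b ((TensorProduct.assoc k S K S).symm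
      (St.SB.coact.lTensor S (St.SB.comul s))) := fun b => by
    rw [← St.A.Amul_tmul_one_one_tmul, tau_Amul, Boson.Acomul_tmul_one_s13]
    rfl
  rw [hτ, hG, LinearMap.smul_apply, smul_eq_mul, ← hτ]

theorem tauRS_mul_right_s13 (t s : S) (r : R) :
    St.tauRS r (t * s)
      = TensorProduct.lift ((LinearMap.mul k k).compl₁₂ (St.tauRS.flip s) (St.tauRS.flip t))
          (St.RB.comul r) := by
  rw [tauRS_apply_s13, ← St.H.Amul_tmul_one_tmul_one, tau_Hmul, Boson.Acomul_tmul_one_s13]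
  induction St.RB.comul r using TensorProduct.induction_on with
  | zero => simp
  | add => simp_all
  | tmul r₁ r₂ =>
    have hc : ∀ c : J ⊗[k] R, TensorProduct.lift ((LinearMap.mul k k).compl₁₂
        (St.τ.flip (s ⊗ₜ[k] 1)) (St.τ.flip (t ⊗ₜ[k] 1)))
          (TensorProduct.map LinearMap.id (incl₁ k) ((TensorProduct.assoc k R J R).symm
            (r₁ ⊗ₜ[k] c)))
        = St.tauRS r₁ s * St.tauRS (TensorProduct.lid k R (St.DJ.counit.rTensor R c)) t := by
      intro c
      induction c using TensorProduct.induction_on with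
      | zero => simp
      | add => simp_all [tmul_add, mul_add]
      | tmul a y => simp [incl₁, tauRS_apply_s13, tau_tmul_tmul_one St r₁ a, mul_assoc, mul_left_comm]
    simpa [BGH.toBosonTensor, St.RB.coact_counit] using hc (St.RB.coact r₂)

theorem tauRS_mul_left_of_mem_primitives (v z : R) {w : S} (hw : w ∈ St.SB.primitives k) :
    St.tauRS (v * z) w = St.tauRS v w * St.RB.counit z + St.RB.counit v * St.tauRS z w := by
  have hc : ∀ c : K ⊗[k] S, TensorProduct.lift ((LinearMap.mul k k).compl₁₂
      (St.τ (v ⊗ₜ[k] 1)) (St.τ (z ⊗ₜ[k] 1))) (TensorProduct.map (incl₂ k) (incl₁ k) c)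
      = St.RB.counit v * St.tauRS z (TensorProduct.lid k S (St.DK.counit.rTensor S c)) := by
    intro c
    induction c using TensorProduct.induction_on <;>
      simp_all [incl₁, incl₂, tau_tmul_one_one_tmul, tauRS_apply_s13, add_tmul, mul_add, mul_assoc]
  rw [tauRS_apply_s13, ← St.A.Amul_tmul_one_tmul_one, tau_Amul, Boson.Acomul_tmul_one_s13,
    show St.SB.comul w = _ from hw, map_add, map_add, BGH.toBosonTensor_tmul_one,
    BGH.toBosonTensor_one_tmul, hc, St.SB.coact_counit]
  simp [tauRS_apply_s13, tau_tmul_one_one_tmul, St.DK.counit_one]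

theorem tauRS_eq_zero_of_mem_grade_zero_right {m : ℕ} (hm : m ≠ 0) {r : R}
    (hr : r ∈ St.RB.grade m) {s : S} (hs : s ∈ St.SB.grade 0) : St.tauRS r s = 0 := by
  rw [BGH.eq_counit_smul_one hs, map_smul, tauRS_one_right,
    BGH.counit_eq_zero_of_mem_grade hm hr, smul_zero]

theorem tauRS_eq_zero_of_mem_grade_one_right {m : ℕ} (hm : m ≠ 1) {r : R}
    (hr : r ∈ St.RB.grade m) {w : S} (hw : w ∈ St.SB.grade 1) : St.tauRS r w = 0 := by
  cases m with
  | zero =>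
    rw [BGH.eq_counit_smul_one hr, map_smul, LinearMap.smul_apply, tauRS_one_left,
      BGH.counit_eq_zero_of_mem_grade one_ne_zero hw, smul_zero]
  | succ m =>
    refine ((BGH.grade_succ_le_mul St.RB_pre m).trans (Submodule.mul_le.2 fun v hv z hz => ?_) hr :
      r ∈ LinearMap.ker (St.tauRS.flip w))
    rw [LinearMap.mem_ker, LinearMap.flip_apply, tauRS_mul_left_of_mem_primitives St v z
      (BGH.mem_primitives_of_mem_grade_one hw), BGH.counit_eq_zero_of_mem_grade (by omega) hz,
      BGH.counit_eq_zero_of_mem_grade one_ne_zero hv, mul_zero, zero_mul, add_zero]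

theorem tauRS_eq_zero_of_ne {m n : ℕ} (hmn : m ≠ n) {r : R} (hr : r ∈ St.RB.grade m) {s : S}
    (hs : s ∈ St.SB.grade n) : St.tauRS r s = 0 := by
  induction n using Nat.strong_induction_on generalizing m r s with
  | _ n IH =>
  match n with
  | 0 => exact St.tauRS_eq_zero_of_mem_grade_zero_right hmn hr hs
  | 1 => exact St.tauRS_eq_zero_of_mem_grade_one_right hmn hr hs
  | n + 2 =>
    refine ((BGH.grade_succ_le_mul St.SB_pre (n + 1)).trans
      (Submodule.mul_le.2 fun w hw y hy => ?_) hs : s ∈ LinearMap.ker (St.tauRS r))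
    obtain ⟨p, d, e, r₁, r₂, hc, hΔ⟩ := St.RB.comul_grade r hr
    rw [LinearMap.mem_ker, tauRS_mul_right_s13, hΔ, map_sum]
    refine Finset.sum_eq_zero fun i _ => ?_
    obtain ⟨hde, h₁, h₂⟩ := hc i
    simp only [lift.tmul, LinearMap.compl₁₂_apply, LinearMap.flip_apply, LinearMap.mul_apply']
    by_cases hd : d i = n + 1
    · rw [IH 1 (by omega) (by omega) h₂ hw, mul_zero]
    · rw [IH (n + 1) (by omega) hd h₁ hy, zero_mul]

theorem tauRS_proj (n : ℕ) (r : R) (s : S) :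
    St.tauRS (proj St.RB.grade n r) s = St.tauRS r (proj St.SB.grade n s) := by
  have h := linearMap_ext_of_grade St.RB.grade (f := St.tauRS ∘ₗ proj St.RB.grade n)
    (g := St.tauRS.compl₂ (proj St.SB.grade n)) fun m r hr =>
      linearMap_ext_of_grade St.SB.grade fun m' s hs => by
        simp only [LinearMap.comp_apply, LinearMap.compl₂_apply]
        by_cases hm : m = n <;> by_cases hm' : m' = n
        · subst hm hm'; rw [proj_of_mem _ hr, proj_of_mem _ hs]
        · subst hm
          rw [proj_of_mem _ hr, proj_of_mem_ne _ hs hm', map_zero,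
            St.tauRS_eq_zero_of_ne (Ne.symm hm') hr hs]
        · subst hm'
          rw [proj_of_mem_ne _ hr hm, proj_of_mem _ hs, map_zero, LinearMap.zero_apply,
            St.tauRS_eq_zero_of_ne hm hr hs]
        · rw [proj_of_mem_ne _ hr hm, proj_of_mem_ne _ hs hm', map_zero, map_zero,
            LinearMap.zero_apply]
  exact LinearMap.congr_fun (LinearMap.congr_fun h r) s

theorem sAct_eq_sum {ι : Type} [Fintype ι] (s : S) {x : R} {x₁ x₂ : ι → R}
    (h : St.RB.comul x = ∑ i, x₁ i ⊗ₜ[k] x₂ i) :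
    St.sAct s x = ∑ i, St.tauRS (x₁ i) s • x₂ i := by
  simp [Setup.sAct, h]

theorem sAct_one (x : R) : St.sAct 1 x = x := by
  have h : St.tauRS.flip 1 = St.RB.counit := LinearMap.ext St.tauRS_one_right
  simp only [Setup.sAct, LinearMap.coe_comp, Function.comp_apply, h, LinearEquiv.coe_coe,
    St.RB.counit_comul]

theorem counit_sAct (s : S) (x : R) : St.RB.counit (St.sAct s x) = St.tauRS x s := by
  conv_rhs => rw [← St.RB.comul_counit x]
  simp only [Setup.sAct, LinearMap.coe_comp, Function.comp_apply, LinearEquiv.coe_coe]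
  induction St.RB.comul x using TensorProduct.induction_on <;> simp_all [mul_comm]

theorem tauRS_sAct (s t : S) (x : R) : St.tauRS (St.sAct s x) t = St.tauRS x (t * s) := by
  rw [tauRS_mul_right_s13]
  simp only [Setup.sAct, LinearMap.coe_comp, Function.comp_apply, LinearEquiv.coe_coe]
  induction St.RB.comul x using TensorProduct.induction_on <;> simp_all

theorem sAct_mem_grade {d n : ℕ} {s : S} (hs : s ∈ St.SB.grade d) {x : R}
    (hx : x ∈ St.RB.grade n) : St.sAct s x ∈ St.RB.grade (n - d) := by
  obtain ⟨p, d', e, x₁, x₂, hc, hΔ⟩ := St.RB.comul_grade x hx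
  rw [sAct_eq_sum St s hΔ]
  refine Submodule.sum_mem _ fun i _ => ?_
  obtain ⟨hde, h₁, h₂⟩ := hc i
  by_cases h : d' i = d
  · exact Submodule.smul_mem _ _ (by rwa [show n - d = e i by omega])
  · rw [St.tauRS_eq_zero_of_ne h h₁ hs, zero_smul]
    exact Submodule.zero_mem _

theorem sAct_eq_zero_of_lt {d m : ℕ} (hmd : m < d) {s : S} (hs : s ∈ St.SB.grade d) {x : R}
    (hx : x ∈ St.RB.grade m) : St.sAct s x = 0 := by
  obtain ⟨p, d', e, x₁, x₂, hc, hΔ⟩ := St.RB.comul_grade x hx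
  rw [sAct_eq_sum St s hΔ]
  refine Finset.sum_eq_zero fun i _ => ?_
  rw [St.tauRS_eq_zero_of_ne (by have := (hc i).1; omega) (hc i).2.1 hs,
    zero_smul]

theorem sAct_of_mem_grade {n : ℕ} {s : S} (hs : s ∈ St.SB.grade n) {x : R}
    (hx : x ∈ St.RB.grade n) : St.sAct s x = St.tauRS x s • 1 := by
  have h := St.sAct_mem_grade hs hx
  rw [Nat.sub_self] at h
  rw [BGH.eq_counit_smul_one h, counit_sAct]

theorem rTensor_proj_comul_eq_zero {n d : ℕ} {r : R} (hr : r ∈ St.RB.grade n)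
    (hrad : ∀ s, St.tauRS r s = 0)
    (hd_nondeg : ∀ x ∈ St.RB.grade d, (∀ s, St.tauRS x s = 0) → x = 0)
    (hnd_nondeg : ∀ x ∈ St.RB.grade (n - d), (∀ s, St.tauRS x s = 0) → x = 0) :
    (proj St.RB.grade d).rTensor R (St.RB.comul r) = 0 := by
  let π : R →ₗ[k] St.RB.grade d := (proj St.RB.grade d).codRestrict _ (proj_mem _ d)
  have hπ : proj St.RB.grade d = (St.RB.grade d).subtype ∘ₗ π := rfl
  have hcontract : ∀ s, (St.tauRS ∘ₗ (St.RB.grade d).subtype).flip s ∘ₗ π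
      = St.tauRS.flip (proj St.SB.grade d s) :=
    fun s => LinearMap.ext fun x => St.tauRS_proj d x s
  -- The contraction of `(π ⊗ id) (Δ r)` against `s` is `(proj d s) ▷ r ∈ R(n - d)`, which is
  -- in the radical of `τ` together with `r`.
  suffices h : π.rTensor R (St.RB.comul r) = 0 by
    rw [hπ, LinearMap.rTensor_comp_apply, h, map_zero]
  refine eq_zero_of_forall_contract_eq_zero (St.tauRS ∘ₗ (St.RB.grade d).subtype)
    (fun x hx => Subtype.ext (hd_nondeg x x.2 hx)) fun s => ?_
  rw [← LinearMap.rTensor_comp_apply, hcontract]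
  refine hnd_nondeg _ (St.sAct_mem_grade (proj_mem _ d s) hr) fun t => ?_
  change St.tauRS (St.sAct _ r) t = 0
  rw [tauRS_sAct, hrad]

theorem eq_zero_of_tauRS_eq_zero
    (hinj : ∀ v ∈ St.RB.grade 1, (∀ w ∈ St.SB.grade 1, St.tauRS v w = 0) → v = 0)
    (hN : St.RB.IsNichols k) {n : ℕ} {r : R} (hr : r ∈ St.RB.grade n)
    (hrad : ∀ s, St.tauRS r s = 0) : r = 0 := by
  induction n using Nat.strong_induction_on generalizing r with
  | _ n IH =>
  match n with
  | 0 => rw [BGH.eq_counit_smul_one hr, ← tauRS_one_right, hrad, zero_smul]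
  | 1 => exact hinj r hr fun w _ => hrad w
  | n + 2 =>
    have hprim : r ∈ St.RB.primitives k :=
      BGH.mem_primitives_of_rTensor_proj_comul_eq_zero (by omega) hr fun d hd hdn =>
        St.rTensor_proj_comul_eq_zero hr hrad (fun _ hx => IH d hdn hx)
          (fun _ hx => IH _ (by omega) hx)
    have h₁ : r ∈ St.RB.grade 1 := (Set.ext_iff.1 hN.2 r).2 hprim
    rw [← proj_of_mem _ hr, proj_of_mem_ne _ h₁ (by omega)]

theorem sAct_proj_eq_smul_one {n : ℕ} {x : R}
    (hx : ∑ m ∈ Finset.range (n + 1), proj St.RB.grade m x = x) (s : S) :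
    St.sAct (proj St.SB.grade n s) x = St.tauRS (proj St.RB.grade n x) s • 1 := by
  conv_lhs => rw [← hx]
  rw [map_sum, Finset.sum_eq_single_of_mem n (Finset.self_mem_range_succ n)
    fun m hm hmn => St.sAct_eq_zero_of_lt (lt_of_le_of_ne (Finset.mem_range_succ_iff.1 hm) hmn)
      (proj_mem _ n s) (proj_mem _ m x), St.sAct_of_mem_grade (proj_mem _ n s) (proj_mem _ n x),
    ← tauRS_proj, proj_of_mem _ (proj_mem _ n x)]

end Setup

theorem statement13_general (St : Setup k J K R S)
    -- τ₁^l : V → W* is injective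
    (hinj : ∀ v ∈ St.RB.grade 1, (∀ w ∈ St.SB.grade 1, St.tauRS v w = 0) → v = 0)
    -- R is the Nichols algebra of V
    (hN : St.RB.IsNichols k) :
    -- R, regarded as a left ℬ-module via ρ (the Verma module), is simple:
    -- it has no nontrivial ℬ-stable subspaces
    ∀ N : Submodule k R,
      (∀ (r : R) (s : S) (x : R), x ∈ N → r * St.sAct s x ∈ N) →
      N = ⊥ ∨ N = ⊤ := by
  intro N hstable
  refine or_iff_not_imp_left.2 fun hbot => ?_
  obtain ⟨x, hxN, hx⟩ := (Submodule.ne_bot_iff N).1 hbot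
  obtain ⟨n, hxn, hsum⟩ := exists_proj_ne_zero_sum_proj St.RB.grade hx
  obtain ⟨s, hs⟩ : ∃ s, St.tauRS (proj St.RB.grade n x) s ≠ 0 := by
    by_contra! h
    exact hxn (St.eq_zero_of_tauRS_eq_zero hinj hN (proj_mem _ n x) h)
  have hone : (1 : R) ∈ N := by
    have h := N.smul_mem (St.tauRS (proj St.RB.grade n x) s)⁻¹
      (hstable 1 (proj St.SB.grade n s) x hxN)
    rwa [one_mul, St.sAct_proj_eq_smul_one hsum, smul_smul, inv_mul_cancel₀ hs, one_smul] at h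
  refine Submodule.eq_top_iff'.2 fun y => ?_
  simpa [St.sAct_one] using hstable y 1 1 hone

theorem statement13 (St : Setup k J K R S) [Nontrivial R]
    -- the generalized q-boson algebra ℬ
    (Q : QBosonAlg St)
    -- τ₁^l : V → W* is injective
    (hinj : ∀ v ∈ St.RB.grade 1, (∀ w ∈ St.SB.grade 1, St.tauRS v w = 0) → v = 0)
    -- R is the Nichols algebra of V
    (hN : St.RB.IsNichols k) :
    -- R, regarded as a left ℬ-module via ρ (the Verma module), is simple:
    -- it has no nontrivial ℬ-stable subspaces
    ∀ N : Submodule k R,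
      (∀ (r : R) (s : S) (x : R), x ∈ N → r * St.sAct s x ∈ N) →
      N = ⊥ ∨ N = ⊤ :=
  statement13_general St hinj hN

end QB
end
end

section
/- In the standing setup, let ν : R⊗R^g → End(R) be the canonical linear injection ν(r⊗f)(r') = r⟨f, r'⟩, let χ : R⊗R → R⊗R be the right R-linear isomorphism χ(r⊗r') = r₍₁₎ ⊗ r₍₂₎r', let χ^∨ : End(R) → End(R) be the induced linear isomorphism (the right R-linear dual of χ), and set μ = χ^∨ ∘ ν. Then: (1) μ : R⊗R^g → End(R) is the linear injection given by μ(r⊗f)(r') = r ⟨f, r'₍₁₎⟩ r'₍₂₎; (2) the composite ℬ = R⊗S → R⊗R^g → End(R), where the first map is id⊗τ_{RS}^r and the second is μ, coincides with ρ. -/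
/-!
`ν` is injective because `R` is free: expanding `x = ∑ bᵢ ⊗ fᵢ` over a basis `(bᵢ)` of `R`,
`ν(x)(r') = ∑ fᵢ(r') bᵢ`, so `ν(x)` determines every `fᵢ`. `χ^∨` is injective because
`h ↦ (r ↦ h(r₍₁₎) 𝒮(r₍₂₎))` is a left inverse: by coassociativity
`χ^∨(g)(r₍₁₎) 𝒮(r₍₂₎) = g(r₍₁₎) r₍₂₎ 𝒮(r₍₃₎) = g(r₍₁₎) ε(r₍₂₎) = g(r)`.
On pure tensors `μ(r ⊗ f)(r') = r ⟨f, r'₍₁₎⟩ r'₍₂₎`, which for `f = τ_{RS}^r(s)` is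
`r (s ▷ r')` by the very definition of `▷`.
-/

open TensorProduct BigOperators

noncomputable section

namespace QB

variable {k : Type} [Field k]
variable {J : Type} [Ring J] [Algebra k J] {R : Type} [Ring R] [Algebra k R]

/-- The graded dual `R^g = ⊕ₙ R(n)*`, realized as the submodule of `R*` of functionals
vanishing on all components of sufficiently high degree. -/
def gdual (D : HopfData k J) (RB : BGH k J D R) : Submodule k (Module.Dual k R) where
  carrier := {f | ∃ N : ℕ, ∀ n, N ≤ n → ∀ r ∈ RB.grade n, f r = 0}
  add_mem' := by
    rintro f g ⟨N, hN⟩ ⟨M, hM⟩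
    exact ⟨max N M, fun n hn r hr => by
      simp [hN n (le_trans (le_max_left _ _) hn) r hr,
        hM n (le_trans (le_max_right _ _) hn) r hr]⟩
  zero_mem' := ⟨0, fun n _ r _ => rfl⟩
  smul_mem' := by
    rintro c f ⟨N, hN⟩
    exact ⟨N, fun n hn r hr => by simp [hN n hn r hr]⟩

/-- The degree-`n` part `R(n)*` of the graded dual: functionals vanishing on all
components of degree `≠ n`. -/
def ddual (D : HopfData k J) (RB : BGH k J D R) (n : ℕ) : Submodule k (Module.Dual k R) where
  carrier := {f | ∀ m, m ≠ n → ∀ r ∈ RB.grade m, f r = 0}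
  add_mem' := by
    intro f g hf hg
    intro m hm r hr
    simp [hf m hm r hr, hg m hm r hr]
  zero_mem' := fun m _ r _ => rfl
  smul_mem' := by
    intro c f hf m hm r hr
    simp [hf m hm r hr]

end QB

namespace QB

variable {k : Type} [Field k]
variable {J : Type} [Ring J] [Algebra k J] {R : Type} [Ring R] [Algebra k R]
variable {K S : Type} [Ring K] [Algebra k K] [Ring S] [Algebra k S]

/-- The canonical linear injection `ν : R ⊗ R^g → End(R)`, `ν(r ⊗ f)(r') = ⟨f, r'⟩ r`. -/
def nuMap (St : Setup k J K R S) :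
    (R ⊗[k] ↥(gdual St.DJ St.RB)) →ₗ[k] (R →ₗ[k] R) :=
  TensorProduct.lift <| LinearMap.mk₂ k
    (fun r f => LinearMap.smulRight ((gdual St.DJ St.RB).subtype f) r)
    (fun r r' f => by ext y; simp [smul_add])
    (fun c r f => by ext y; exact smul_comm _ c r)
    (fun r f f' => by ext y; simp [add_smul])
    (fun c r f => by
      ext y
      simp only [LinearMap.smulRight_apply, LinearMap.smul_apply, Submodule.coe_subtype,
        SetLike.val_smul, smul_eq_mul, mul_smul])

/-- `χ^∨ : End(R) → End(R)`, the right `R`-linear dual of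
`χ(r ⊗ r') = r₍₁₎ ⊗ r₍₂₎ r'`; concretely `χ^∨(g)(r') = g(r'₍₁₎) r'₍₂₎`. -/
def chiDual (St : Setup k J K R S) (g : R →ₗ[k] R) : R →ₗ[k] R :=
  (LinearMap.mul' k R) ∘ₗ (g.rTensor R) ∘ₗ St.RB.comul

theorem injective_of_tmul_apply_eq_smul {A V W : Type} [CommRing A] [AddCommGroup V]
    [Module A V] [Module.Free A V] [AddCommGroup W] [Module A W]
    {P : Submodule A (Module.Dual A W)} (Φ : V ⊗[A] P →ₗ[A] W →ₗ[A] V)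
    (hΦ : ∀ v f w, Φ (v ⊗ₜ[A] f) w = (f : Module.Dual A W) w • v) :
    Function.Injective Φ := by
  classical
  let b := Module.Free.chooseBasis A V
  refine (injective_iff_map_eq_zero Φ).2 fun x hx => ?_
  obtain ⟨c, rfl⟩ := TensorProduct.eq_repr_basis_left b x
  suffices c = 0 by simp [this]
  ext i w
  by_contra hne
  have hsum : ∑ j ∈ c.support, (c j : Module.Dual A W) w • b j = 0 := by
    simpa [Finsupp.sum, hΦ] using LinearMap.congr_fun hx w
  have hi : i ∈ c.support := Finsupp.mem_support_iff.2 fun h => hne (by simp [h])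
  exact hne (linearIndependent_iff'.1 b.linearIndependent _ _ hsum i hi)

theorem nuMap_tmul_apply (St : Setup k J K R S) (r : R) (f : gdual St.DJ St.RB) (r' : R) :
    nuMap St (r ⊗ₜ[k] f) r' = (f : Module.Dual k R) r' • r := by
  simp [nuMap]

theorem nuMap_injective (St : Setup k J K R S) : Function.Injective (nuMap St) :=
  injective_of_tmul_apply_eq_smul _ (nuMap_tmul_apply St)

theorem BGH.mul'_lTensor_antipodeR_comul {D : HopfData k J} (B : BGH k J D R) (r : R) :
    LinearMap.mul' k R (B.antipodeR.lTensor R (B.comul r)) = B.counit r • 1 := by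
  obtain ⟨p, r1, r2, h⟩ := TensorProduct.exists_sum_tmul_eq (B.comul r)
  simpa [h] using B.conv_antipodeR r p r1 r2 h

theorem BGH.mul'_map_chi_antipodeR_comul {D : HopfData k J} (B : BGH k J D R)
    (g : R →ₗ[k] R) (r : R) :
    LinearMap.mul' k R (TensorProduct.map (LinearMap.mul' k R ∘ₗ g.rTensor R ∘ₗ B.comul)
      B.antipodeR (B.comul r)) = g r := by
  let E : R ⊗[k] (R ⊗[k] R) →ₗ[k] R :=
    LinearMap.mul' k R ∘ₗ TensorProduct.map g (LinearMap.mul' k R ∘ₗ B.antipodeR.lTensor R)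
  have hassoc : LinearMap.mul' k R ∘ₗ TensorProduct.map (LinearMap.mul' k R ∘ₗ g.rTensor R)
      B.antipodeR = E ∘ₗ (TensorProduct.assoc k R R R).toLinearMap :=
    TensorProduct.ext_threefold fun x y z => by simp [E, mul_assoc]
  have hcounit : E ∘ₗ B.comul.lTensor R
      = g ∘ₗ (TensorProduct.rid k R).toLinearMap ∘ₗ B.counit.lTensor R :=
    TensorProduct.ext' fun x y => by simp [E, B.mul'_lTensor_antipodeR_comul]
  calc _ = (LinearMap.mul' k R ∘ₗ TensorProduct.map (LinearMap.mul' k R ∘ₗ g.rTensor R)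
          B.antipodeR) (B.comul.rTensor R (B.comul r)) :=
        congrArg (LinearMap.mul' k R)
          (LinearMap.congr_fun (LinearMap.map_comp_rTensor (f' := B.comul) ..).symm (B.comul r))
    _ = E (B.comul.lTensor R (B.comul r)) := by
        rw [hassoc, LinearMap.comp_apply, LinearEquiv.coe_coe, B.coassoc]
    _ = g r := by
        rw [← LinearMap.comp_apply E, hcounit]
        simp only [LinearMap.comp_apply, LinearEquiv.coe_coe, B.comul_counit]

theorem chiDual_injective (St : Setup k J K R S) : Function.Injective (chiDual St) :=
  fun g h hgh => LinearMap.ext fun r => by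
    rw [← St.RB.mul'_map_chi_antipodeR_comul g, ← St.RB.mul'_map_chi_antipodeR_comul h]
    exact congrArg (fun φ => LinearMap.mul' k R (TensorProduct.map φ _ _)) hgh

theorem chiDual_nuMap_tmul_apply (St : Setup k J K R S) (r : R) (f : gdual St.DJ St.RB)
    (r' : R) : chiDual St (nuMap St (r ⊗ₜ[k] f)) r'
      = r * TensorProduct.lid k R ((f : Module.Dual k R).rTensor R (St.RB.comul r')) := by
  suffices LinearMap.mul' k R ∘ₗ (nuMap St (r ⊗ₜ[k] f)).rTensor R
      = LinearMap.mulLeft k r ∘ₗ (TensorProduct.lid k R).toLinearMap ∘ₗ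
        (f : Module.Dual k R).rTensor R from LinearMap.congr_fun this (St.RB.comul r')
  exact TensorProduct.ext' fun x y => by simp [nuMap_tmul_apply]

theorem statement14_general (St : Setup k J K R S)
    -- τ_{RS}^r : S → R^g lands in the graded dual (by Corollary 2.4 (2))
    (hfl : ∀ s : S, St.tauRS.flip s ∈ gdual St.DJ St.RB) :
    -- (1)  μ = χ^∨ ∘ ν : R ⊗ R^g → End(R) is the linear injection given by
    --      μ(r ⊗ f)(r') = r ⟨f, r'₍₁₎⟩ r'₍₂₎
    (Function.Injective (fun x : R ⊗[k] ↥(gdual St.DJ St.RB) => chiDual St (nuMap St x)) ∧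
     (∀ (r : R) (f : ↥(gdual St.DJ St.RB)) (r' : R) (p : ℕ) (r1 r2 : Fin p → R),
       St.RB.comul r' = ∑ i, r1 i ⊗ₜ[k] r2 i →
       chiDual St (nuMap St (r ⊗ₜ[k] f)) r'
         = ∑ i, (f : Module.Dual k R) (r1 i) • (r * r2 i))) ∧
    -- (2)  the composite ℬ = R ⊗ S --(id ⊗ τ_{RS}^r)--> R ⊗ R^g --μ--> End(R)
    --      coincides with ρ
    (∀ (r : R) (s : S) (r' : R),
      chiDual St (nuMap St (r ⊗ₜ[k] (⟨St.tauRS.flip s, hfl s⟩ : ↥(gdual St.DJ St.RB)))) r'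
        = r * St.sAct s r') := by
  refine ⟨⟨(chiDual_injective St).comp (nuMap_injective St), ?_⟩, ?_⟩
  · intro r f r' p r1 r2 hΔ
    simp [chiDual_nuMap_tmul_apply, hΔ, Finset.mul_sum]
  · intro r s r'
    exact chiDual_nuMap_tmul_apply St r _ r'

theorem statement14 (St : Setup k J K R S)
    (hV : FiniteDimensional k ↥(St.RB.grade 1))
    (hW : FiniteDimensional k ↥(St.SB.grade 1))
    -- τ_{RS}^r : S → R^g lands in the graded dual (by Corollary 2.4 (2))
    (hfl : ∀ s : S, St.tauRS.flip s ∈ gdual St.DJ St.RB) :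
    -- (1)  μ = χ^∨ ∘ ν : R ⊗ R^g → End(R) is the linear injection given by
    --      μ(r ⊗ f)(r') = r ⟨f, r'₍₁₎⟩ r'₍₂₎
    (Function.Injective (fun x : R ⊗[k] ↥(gdual St.DJ St.RB) => chiDual St (nuMap St x)) ∧
     (∀ (r : R) (f : ↥(gdual St.DJ St.RB)) (r' : R) (p : ℕ) (r1 r2 : Fin p → R),
       St.RB.comul r' = ∑ i, r1 i ⊗ₜ[k] r2 i →
       chiDual St (nuMap St (r ⊗ₜ[k] f)) r'
         = ∑ i, (f : Module.Dual k R) (r1 i) • (r * r2 i))) ∧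
    -- (2)  the composite ℬ = R ⊗ S --(id ⊗ τ_{RS}^r)--> R ⊗ R^g --μ--> End(R)
    --      coincides with ρ
    (∀ (r : R) (s : S) (r' : R),
      chiDual St (nuMap St (r ⊗ₜ[k] (⟨St.tauRS.flip s, hfl s⟩ : ↥(gdual St.DJ St.RB)))) r'
        = r * St.sAct s r') :=
  statement14_general St hfl

end QB
end
end
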